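/- arXiv:2510.04185 — 7 statements merged into one kernel-verified Lean document; each statement's English description precedes it below -/
import Mathlib

section
/- For every 0 < c < 1, the logarithmic moment of the Marchenko–Pastur law satisfies (1/(2πc)) ∫_{a(c)}^{b(c)} (log(1+x)/x) · √((b(c)−x)(x−a(c))) dx = log(1+ϱ(c)) + ( −(√c − 1/√c)² ( log(1 − √(c̃(c)·c)) + √(c̃(c)·c) ) − √(c̃(c)) (√c − c^{3/2}) ) / (1−c). -/
open Real

/-- `ϱ(c) = (c + √(c² + 4))/2`. -/
noncomputable def varrho (c : ℝ) : ℝ := (c + Real.sqrt (c ^ 2 + 4)) / 2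

/-- `c̃(c) = 4c/(2 + c + √(c² + 4))²`. -/
noncomputable def ctil (c : ℝ) : ℝ := 4 * c / (2 + c + Real.sqrt (c ^ 2 + 4)) ^ 2

/-- Left edge `a(c) = (1 − √c)²` of the Marchenko–Pastur support. -/
noncomputable def mpA (c : ℝ) : ℝ := (1 - Real.sqrt c) ^ 2

/-- Right edge `b(c) = (1 + √c)²` of the Marchenko–Pastur support. -/
noncomputable def mpB (c : ℝ) : ℝ := (1 + Real.sqrt c) ^ 2

open intervalIntegral


/-- positivity of the kernel denominator -/
lemma D_pos {r : ℝ} (h : |r| < 1) (θ : ℝ) : 0 < 1 - 2*r*Real.cos θ + r^2 := by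
  have h2 : r * Real.cos θ ≤ |r| := by
    calc r * Real.cos θ ≤ |r * Real.cos θ| := le_abs_self _
    _ = |r| * |Real.cos θ| := abs_mul _ _
    _ ≤ |r| * 1 := by gcongr; exact Real.abs_cos_le_one θ
    _ = |r| := mul_one _
  nlinarith [sq_abs r, sq_nonneg (1 - |r|), abs_nonneg r]

/-- ∫₀^π cos(nθ) dθ = 0 for n ≥ 1 -/
lemma int_cos_n {n : ℕ} (hn : 1 ≤ n) :
    ∫ θ in (0:ℝ)..π, Real.cos ((n:ℝ)*θ) = 0 := by
  have hne : (n:ℝ) ≠ 0 := Nat.cast_ne_zero.mpr (by omega)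
  have hd : ∀ θ ∈ Set.uIcc (0:ℝ) π, HasDerivAt (fun t => Real.sin ((n:ℝ)*t)/(n:ℝ))
      (Real.cos ((n:ℝ)*θ)) θ := by
    intro θ _
    have h1 : HasDerivAt (fun t : ℝ => (n:ℝ)*t) ((n:ℝ)) θ := by
      simpa using (hasDerivAt_id θ).const_mul (n:ℝ)
    have h2 := (Real.hasDerivAt_sin ((n:ℝ)*θ)).comp θ h1
    have h3 := h2.div_const (n:ℝ)
    simpa [mul_comm, mul_div_assoc, mul_div_cancel_left₀ _ hne] using h3
  rw [integral_eq_sub_of_hasDerivAt hd ((by fun_prop : Continuous fun t : ℝ => Real.cos ((n:ℝ)*t)).intervalIntegrable 0 π)]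
  simp [Real.sin_nat_mul_pi]

lemma habs {q : ℝ} (hq0 : 0 < q) (hq1 : q < 1) : |q| < 1 := by rwa [abs_of_pos hq0]

lemma cont_invD {q : ℝ} (hq0 : 0 < q) (hq1 : q < 1) :
    Continuous fun θ => (1 - 2*q*Real.cos θ + q^2)⁻¹ := by
  refine Continuous.inv₀ (by fun_prop) fun θ => (D_pos (habs hq0 hq1) θ).ne'

/-- ∫₀^π dθ/(1−2q cos θ+q²) = π/(1−q²). -/
lemma int_C0 {q : ℝ} (hq0 : 0 < q) (hq1 : q < 1) :
    ∫ θ in (0:ℝ)..π, (1 - 2*q*Real.cos θ + q^2)⁻¹ = π / (1 - q^2) := by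
  have hq2 : (1:ℝ) - q^2 ≠ 0 := by nlinarith
  have hd : ∀ θ ∈ Set.uIcc (0:ℝ) π, HasDerivAt
      (fun t => (t + 2 * Real.arctan (q * Real.sin t / (1 - q * Real.cos t))) / (1 - q^2))
      ((1 - 2*q*Real.cos θ + q^2)⁻¹) θ := by
    intro θ _
    have hden : 1 - q * Real.cos θ ≠ 0 := by
      have := Real.cos_le_one θ
      nlinarith
    have hu : HasDerivAt (fun t => q * Real.sin t / (1 - q * Real.cos t))
        ((q * Real.cos θ * (1 - q * Real.cos θ) - q * Real.sin θ * (q * Real.sin θ)) /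
          (1 - q * Real.cos θ)^2) θ := by
      have h1 : HasDerivAt (fun t => q * Real.sin t) (q * Real.cos θ) θ :=
        (Real.hasDerivAt_sin θ).const_mul q
      have h2 : HasDerivAt (fun t => 1 - q * Real.cos t) (q * Real.sin θ) θ := by
        simpa using ((Real.hasDerivAt_cos θ).const_mul q).const_sub 1
      exact h1.div h2 hden
    have ha := hu.arctan
    have hid : HasDerivAt (fun t : ℝ => t) 1 θ := hasDerivAt_id θ
    have h3 := (hid.add (ha.const_mul 2)).div_const (1 - q^2)
    refine h3.congr_deriv ?_; symm
    have hsc := Real.sin_sq_add_cos_sq θ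
    have hD := (D_pos (habs hq0 hq1) θ).ne'
    have hs2 : Real.sin θ ^ 2 = 1 - Real.cos θ ^ 2 := by nlinarith [hsc]
    have e1 : (q * Real.sin θ / (1 - q * Real.cos θ))^2
        = q^2 * (1 - Real.cos θ^2)/(1 - q*Real.cos θ)^2 := by
      rw [div_pow, mul_pow, hs2]
    have e2 : q * Real.sin θ * (q * Real.sin θ) = q^2*(1 - Real.cos θ^2) := by
      nlinarith [hsc]
    rw [e1, e2]
    have hpos : (1 - q*Real.cos θ)^2 + q^2*(1 - Real.cos θ^2) ≠ 0 := by
      have := D_pos (habs hq0 hq1) θ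
      nlinarith [hsc]
    field_simp
    ring
  rw [integral_eq_sub_of_hasDerivAt hd ((cont_invD hq0 hq1).intervalIntegrable 0 π)]
  simp [Real.sin_pi, Real.cos_pi, Real.sin_zero, Real.cos_zero]

lemma cont_cosmulinvD {q : ℝ} (hq0 : 0 < q) (hq1 : q < 1) (k : ℝ) :
    Continuous fun θ => Real.cos (k*θ) * (1 - 2*q*Real.cos θ + q^2)⁻¹ :=
  (by fun_prop : Continuous fun θ : ℝ => Real.cos (k*θ)).mul (cont_invD hq0 hq1)

/-- the Poisson-kernel cosine integrals -/
lemma int_Cn {q : ℝ} (hq0 : 0 < q) (hq1 : q < 1) (n : ℕ) :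
    ∫ θ in (0:ℝ)..π, Real.cos ((n:ℝ)*θ) * (1 - 2*q*Real.cos θ + q^2)⁻¹
      = π * q^n / (1 - q^2) := by
  have hq2 : (1:ℝ) - q^2 ≠ 0 := by nlinarith
  have hqne : q ≠ 0 := hq0.ne'
  have hDne : ∀ θ : ℝ, 1 - 2*q*Real.cos θ + q^2 ≠ 0 := fun θ => (D_pos (habs hq0 hq1) θ).ne'
  -- base case 0
  have P0 : ∫ θ in (0:ℝ)..π, Real.cos ((0:ℝ)*θ) * (1 - 2*q*Real.cos θ + q^2)⁻¹
      = π * q^(0:ℕ) / (1 - q^2) := by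
    simp only [zero_mul, Real.cos_zero, one_mul, pow_zero, mul_one]
    exact int_C0 hq0 hq1
  -- base case 1
  have P1 : ∫ θ in (0:ℝ)..π, Real.cos ((1:ℝ)*θ) * (1 - 2*q*Real.cos θ + q^2)⁻¹
      = π * q^(1:ℕ) / (1 - q^2) := by
    have key : ∀ θ : ℝ, Real.cos ((1:ℝ)*θ) * (1 - 2*q*Real.cos θ + q^2)⁻¹
        = (1+q^2)/(2*q) * (1 - 2*q*Real.cos θ + q^2)⁻¹ - 1/(2*q) := by
      intro θ
      have := hDne θ
      rw [one_mul]
      generalize hD : (1 - 2*q*Real.cos θ + q^2) = D at this ⊢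
      field_simp
      rw [← hD]
      ring
    simp only [key]
    rw [integral_sub ((continuous_const.fun_mul (cont_invD hq0 hq1)).intervalIntegrable 0 π)
      (intervalIntegrable_const), integral_const_mul, integral_const, int_C0 hq0 hq1]
    simp only [smul_eq_mul]; field_simp
    ring
  -- inductive step
  have step : ∀ n : ℕ,
      (∫ θ in (0:ℝ)..π, Real.cos ((n:ℝ)*θ) * (1 - 2*q*Real.cos θ + q^2)⁻¹
        = π * q^n / (1 - q^2)) →
      (∫ θ in (0:ℝ)..π, Real.cos (((n:ℝ)+1)*θ) * (1 - 2*q*Real.cos θ + q^2)⁻¹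
        = π * q^(n+1) / (1 - q^2)) →
      (∫ θ in (0:ℝ)..π, Real.cos (((n:ℝ)+2)*θ) * (1 - 2*q*Real.cos θ + q^2)⁻¹
        = π * q^(n+2) / (1 - q^2)) := by
    intro n hn hn1
    have key : ∀ θ : ℝ, Real.cos (((n:ℝ)+2)*θ) * (1 - 2*q*Real.cos θ + q^2)⁻¹
        = (1+q^2)/q * (Real.cos (((n:ℝ)+1)*θ) * (1 - 2*q*Real.cos θ + q^2)⁻¹)
          - (1/q) * Real.cos (((n:ℝ)+1)*θ)
          - Real.cos ((n:ℝ)*θ) * (1 - 2*q*Real.cos θ + q^2)⁻¹ := by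
      intro θ
      have hD := hDne θ
      have hc : Real.cos (((n:ℝ)+2)*θ)
          = 2 * Real.cos (((n:ℝ)+1)*θ) * Real.cos θ - Real.cos ((n:ℝ)*θ) := by
        have e1 : ((n:ℝ)+2)*θ = ((n:ℝ)+1)*θ + θ := by ring
        have e2 : (n:ℝ)*θ = ((n:ℝ)+1)*θ - θ := by ring
        rw [e1, e2, Real.cos_add, Real.cos_sub]; ring
      rw [hc]
      generalize hD' : (1 - 2*q*Real.cos θ + q^2) = D at hD ⊢
      field_simp
      rw [← hD']
      ring
    simp only [key]
    have i1 : IntervalIntegrable (fun θ : ℝ =>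
        Real.cos (((n:ℝ)+1)*θ) * (1 - 2*q*Real.cos θ + q^2)⁻¹) MeasureTheory.volume 0 π :=
      (cont_cosmulinvD hq0 hq1 ((n:ℝ)+1)).intervalIntegrable (0:ℝ) π
    have i2 : IntervalIntegrable (fun θ : ℝ =>
        Real.cos (((n:ℝ)+1)*θ)) MeasureTheory.volume 0 π :=
      (by fun_prop : Continuous fun θ : ℝ =>
        Real.cos (((n:ℝ)+1)*θ)).intervalIntegrable (0:ℝ) π
    have i3 : IntervalIntegrable (fun θ : ℝ =>
        Real.cos ((n:ℝ)*θ) * (1 - 2*q*Real.cos θ + q^2)⁻¹) MeasureTheory.volume 0 π :=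
      (cont_cosmulinvD hq0 hq1 ((n:ℝ))).intervalIntegrable (0:ℝ) π
    rw [integral_sub ((i1.const_mul _).sub (i2.const_mul _)) i3,
      integral_sub (i1.const_mul _) (i2.const_mul _), integral_const_mul, integral_const_mul,
      hn1, hn]
    have hic : ∫ θ in (0:ℝ)..π, Real.cos (((n:ℝ)+1)*θ) = 0 := by
      have := int_cos_n (n := n+1) (by omega)
      push_cast at this
      exact this
    rw [hic]
    field_simp
    ring
  -- two-step induction
  induction n using Nat.twoStepInduction with
  | zero => simpa using P0
  | one => simpa using P1
  | more n ih1 ih2 =>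
      have := step n ih1 (by push_cast at ih2 ⊢; convert ih2 using 3 <;> push_cast <;> ring)
      push_cast at this ⊢
      convert this using 3 <;> push_cast <;> ring

/-- ∫₀^π cos(nθ)·cos θ dθ = 0 for n ≠ 1. -/
lemma int_cosn_cos {n : ℕ} (hn : n ≠ 1) :
    ∫ θ in (0:ℝ)..π, Real.cos ((n:ℝ)*θ) * Real.cos θ = 0 := by
  match n, hn with
  | 0, _ => simpa using integral_cos (a := 0) (b := π)
  | (m+2), _ =>
    have key : ∀ θ : ℝ, Real.cos (((m:ℝ)+2)*θ) * Real.cos θ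
        = (Real.cos (((m:ℝ)+3)*θ) + Real.cos (((m:ℝ)+1)*θ))/2 := by
      intro θ
      have e1 : ((m:ℝ)+3)*θ = ((m:ℝ)+2)*θ + θ := by ring
      have e2 : ((m:ℝ)+1)*θ = ((m:ℝ)+2)*θ - θ := by ring
      rw [e1, e2, Real.cos_add, Real.cos_sub]; ring
    push_cast
    simp only [key]
    have i1 : IntervalIntegrable (fun θ : ℝ => Real.cos (((m:ℝ)+3)*θ))
        MeasureTheory.volume 0 π := (by fun_prop :
        Continuous fun θ : ℝ => Real.cos (((m:ℝ)+3)*θ)).intervalIntegrable 0 π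
    have i2 : IntervalIntegrable (fun θ : ℝ => Real.cos (((m:ℝ)+1)*θ))
        MeasureTheory.volume 0 π := (by fun_prop :
        Continuous fun θ : ℝ => Real.cos (((m:ℝ)+1)*θ)).intervalIntegrable 0 π
    rw [integral_div, integral_add i1 i2]
    have h1 := int_cos_n (n := m+3) (by omega)
    have h2 := int_cos_n (n := m+1) (by omega)
    push_cast at h1 h2
    rw [h1, h2]
    norm_num

/-- ∫₀^π cos θ · cos θ dθ = π/2. -/
lemma int_cos_cos : ∫ θ in (0:ℝ)..π, Real.cos θ * Real.cos θ = π/2 := by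
  have h := integral_cos_sq (a := (0:ℝ)) (b := π)
  simp only [Real.cos_pi, Real.sin_pi, Real.cos_zero, Real.sin_zero] at h
  calc ∫ θ in (0:ℝ)..π, Real.cos θ * Real.cos θ = ∫ θ in (0:ℝ)..π, Real.cos θ ^ 2 := by
        simp only [sq]
    _ = π/2 := by rw [h]; ring

/-- pointwise expansion of the log of the kernel -/
lemma hasSum_logD {r θ : ℝ} (hr0 : 0 ≤ r) (hr1 : r < 1) :
    HasSum (fun n : ℕ => (-2) * r^n / n * Real.cos ((n:ℝ)*θ))
      (Real.log (1 - 2*r*Real.cos θ + r^2)) := by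
  set z : ℂ := (r:ℂ) * Complex.exp ((θ:ℂ) * Complex.I) with hz
  have hnz : ‖z‖ < 1 := by
    rw [hz, norm_mul, Complex.norm_exp_ofReal_mul_I,
      Complex.norm_real, Real.norm_eq_abs, abs_of_nonneg hr0, mul_one]
    exact hr1
  have h2 := Complex.hasSum_re (Complex.hasSum_taylorSeries_neg_log hnz)
  have hterm : ∀ n : ℕ, (z^n/(n:ℂ)).re = r^n/n * Real.cos ((n:ℝ)*θ) := by
    intro n
    have e : z^n/(n:ℂ) = ((r^n/n : ℝ):ℂ) * Complex.exp ((((n:ℝ)*θ : ℝ):ℂ) * Complex.I) := by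
      rw [hz, mul_pow, ← Complex.exp_nat_mul,
        show (n:ℂ) * ((θ:ℂ)*Complex.I) = (((n:ℝ)*θ:ℝ):ℂ)*Complex.I by push_cast; ring]
      push_cast
      ring
    rw [e, Complex.re_ofReal_mul, Complex.exp_ofReal_mul_I_re]
  have habs2 : (‖1-z‖)^2 = 1 - 2*r*Real.cos θ + r^2 := by
    have hre : z.re = r * Real.cos θ := by
      rw [hz, Complex.re_ofReal_mul, Complex.exp_ofReal_mul_I_re]
    have him : z.im = r * Real.sin θ := by
      rw [hz, Complex.im_ofReal_mul, Complex.exp_ofReal_mul_I_im]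
    rw [Complex.sq_norm, Complex.normSq_apply, Complex.sub_re, Complex.sub_im,
      Complex.one_re, Complex.one_im, hre, him]
    nlinarith [Real.sin_sq_add_cos_sq θ]
  have hval : (-Complex.log (1 - z)).re = -Real.log (‖1-z‖) := by
    rw [Complex.neg_re, Complex.log_re]
  have h3 : HasSum (fun n : ℕ => (-2) * (r^n/n * Real.cos ((n:ℝ)*θ)))
      (2 * Real.log (‖1-z‖)) := by
    have := h2.mul_left (-2)
    simp only [hterm, hval] at this
    convert this using 1
    rfl; ring
  have hfun : (fun n : ℕ => (-2) * r^n / n * Real.cos ((n:ℝ)*θ))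
      = fun n : ℕ => (-2) * (r^n/n * Real.cos ((n:ℝ)*θ)) := by
    funext n; ring
  rw [hfun, show Real.log (1 - 2*r*Real.cos θ + r^2) = 2 * Real.log (‖1-z‖) by
    rw [← habs2, Real.log_pow]; push_cast; ring]
  exact h3

/-- term-by-term integration of the log kernel against a continuous function -/
lemma log_series_integral {r : ℝ} (hr0 : 0 ≤ r) (hr1 : r < 1) (g : C(ℝ, ℝ)) :
    ∫ θ in (0:ℝ)..π, Real.log (1 - 2*r*Real.cos θ + r^2) * g θ
      = ∑' n : ℕ, ((-2) * r^n / n) * ∫ θ in (0:ℝ)..π, Real.cos ((n:ℝ)*θ) * g θ := by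
  set K : TopologicalSpace.Compacts ℝ := ⟨Set.uIcc 0 π, isCompact_uIcc⟩ with hK
  set f : ℕ → C(ℝ, ℝ) := fun n =>
    ⟨fun θ => ((-2) * r^n / n * Real.cos ((n:ℝ)*θ)) * g θ,
      (Continuous.mul (continuous_const.mul (by fun_prop)) g.continuous)⟩ with hf
  have hcoef : ∀ n : ℕ, |(-2) * r^n / (n:ℝ)| ≤ 2 * r^n := by
    intro n
    cases n with
    | zero => simp
    | succ m =>
      rw [abs_div, abs_mul, abs_pow, abs_of_nonneg hr0, Nat.abs_cast]
      rw [show |(-2:ℝ)| = 2 by norm_num]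
      apply div_le_self (by positivity)
      exact_mod_cast Nat.one_le_iff_ne_zero.mpr (by omega)
  have hf_sum : Summable fun n => ‖(f n).restrict K‖ := by
    apply Summable.of_nonneg_of_le (fun n => norm_nonneg _)
      (fun n => ?_) ((summable_geometric_of_lt_one hr0 hr1).mul_left (2 * ‖g.restrict K‖))
    rw [ContinuousMap.norm_le _ (by positivity)]
    rintro ⟨x, hx⟩
    have hgx : |g x| ≤ ‖g.restrict K‖ := by
      have := (g.restrict K).norm_coe_le_norm ⟨x, hx⟩
      rw [Real.norm_eq_abs] at this; exact this
    have b1 := hcoef n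
    have b2 := Real.abs_cos_le_one ((n:ℝ)*x)
    have b3 : (0:ℝ) ≤ |g x| := abs_nonneg _
    have b4 : (0:ℝ) ≤ |Real.cos ((n:ℝ)*x)| := abs_nonneg _
    have b5 : (0:ℝ) ≤ 2 * r^n := by positivity
    calc ‖(f n).restrict K ⟨x, hx⟩‖ = |(-2) * r^n / n * Real.cos ((n:ℝ)*x)| * |g x| := by
          rw [show ‖(f n).restrict K ⟨x, hx⟩‖
            = |((-2) * r^n / n * Real.cos ((n:ℝ)*x)) * g x| from rfl, abs_mul]
      _ ≤ (2 * r^n * 1) * ‖g.restrict K‖ := by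
          apply mul_le_mul _ hgx b3 (by positivity)
          calc |(-2) * r^n / n * Real.cos ((n:ℝ)*x)|
              = |(-2) * r^n / (n:ℝ)| * |Real.cos ((n:ℝ)*x)| := abs_mul _ _
            _ ≤ (2 * r^n) * 1 := mul_le_mul b1 b2 b4 b5
      _ = 2 * ‖g.restrict K‖ * r^n := by ring
  have h := intervalIntegral.hasSum_intervalIntegral_of_summable_norm
    (a := (0:ℝ)) (b := π) hf_sum
  have hpt : ∀ θ : ℝ, ∑' n, f n θ = Real.log (1-2*r*Real.cos θ + r^2) * g θ := by
    intro θ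
    exact ((hasSum_logD hr0 hr1).mul_right (g θ)).tsum_eq
  have hint : ∀ n : ℕ, (∫ θ in (0:ℝ)..π, f n θ)
      = ((-2) * r^n / n) * ∫ θ in (0:ℝ)..π, Real.cos ((n:ℝ)*θ) * g θ := by
    intro n
    rw [← integral_const_mul]
    apply integral_congr
    intro θ _
    show ((-2) * r^n / n * Real.cos ((n:ℝ)*θ)) * g θ = _
    ring
  have h2 : HasSum (fun n : ℕ => ((-2) * r^n / n) * ∫ θ in (0:ℝ)..π,
      Real.cos ((n:ℝ)*θ) * g θ) (∫ θ in (0:ℝ)..π, Real.log (1-2*r*Real.cos θ + r^2) * g θ) := by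
    have := h
    simp only [hint] at this
    rwa [integral_congr (fun θ _ => hpt θ)] at this
  exact h2.tsum_eq.symm

/-- L₀ : ∫ log = 0 -/
lemma intL0 (hr0 : 0 ≤ r) (hr1 : r < 1) :
    ∫ θ in (0:ℝ)..π, Real.log (1 - 2*r*Real.cos θ + r^2) = 0 := by
  have h := log_series_integral hr0 hr1 (ContinuousMap.const ℝ 1)
  simp only [ContinuousMap.const_apply, mul_one] at h
  rw [h]
  have : ∀ n : ℕ, ((-2) * r^n / (n:ℝ)) * ∫ θ in (0:ℝ)..π, Real.cos ((n:ℝ)*θ) = 0 := by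
    intro n
    cases n with
    | zero => simp
    | succ m => rw [int_cos_n (by omega)]; ring
  simp only [this, tsum_zero]

/-- L₁ : ∫ log·cos = -π r -/
lemma intL1 (hr0 : 0 ≤ r) (hr1 : r < 1) :
    ∫ θ in (0:ℝ)..π, Real.log (1 - 2*r*Real.cos θ + r^2) * Real.cos θ = -(π*r) := by
  have h := log_series_integral hr0 hr1 ⟨Real.cos, Real.continuous_cos⟩
  simp only [ContinuousMap.coe_mk] at h
  rw [h]
  rw [tsum_eq_single 1 ?side]
  · rw [show ((1:ℕ):ℝ) = 1 by norm_num]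
    rw [show ∫ θ in (0:ℝ)..π, Real.cos (1*θ) * Real.cos θ
        = ∫ θ in (0:ℝ)..π, Real.cos θ * Real.cos θ by norm_num, int_cos_cos]
    norm_num
    ring
  case side =>
    intro n hn
    cases n with
    | zero => simp
    | succ m =>
      rw [int_cosn_cos (by omega)]
      ring

/-- L_P : ∫ log·(Poisson kernel) -/
lemma intLP (hr0 : 0 ≤ r) (hr1 : r < 1) (hq0 : 0 < q) (hq1 : q < 1) :
    ∫ θ in (0:ℝ)..π, Real.log (1 - 2*r*Real.cos θ + r^2) * (1 - 2*q*Real.cos θ + q^2)⁻¹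
      = 2*π/(1 - q^2) * Real.log (1 - r*q) := by
  have h := log_series_integral hr0 hr1
    ⟨fun θ => (1 - 2*q*Real.cos θ + q^2)⁻¹, cont_invD hq0 hq1⟩
  simp only [ContinuousMap.coe_mk] at h
  rw [h]
  have hterm : ∀ n : ℕ, ((-2) * r^n / (n:ℝ)) * ∫ θ in (0:ℝ)..π,
      Real.cos ((n:ℝ)*θ) * (1 - 2*q*Real.cos θ + q^2)⁻¹
      = ((-2)*π/(1-q^2)) * ((r*q)^n/(n:ℝ)) := by
    intro n
    rw [int_Cn hq0 hq1 n, mul_pow]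
    ring
  simp only [hterm]
  have hrq : |r*q| < 1 := by
    rw [abs_of_nonneg (by positivity)]
    nlinarith
  have hs := (hasSum_pow_div_log_of_abs_lt_one hrq).mul_left ((-2)*π/(1-q^2))
  have hshift : HasSum (fun n : ℕ => ((-2)*π/(1-q^2)) * ((r*q)^n/(n:ℝ)))
      (((-2)*π/(1-q^2)) * -Real.log (1 - r*q)) := by
    have h1 : HasSum (fun n : ℕ => ((-2)*π/(1-q^2)) * ((r*q)^(n+1)/((n+1:ℕ):ℝ)))
        (((-2)*π/(1-q^2)) * -Real.log (1 - r*q)) := by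
      convert hs using 2 with n
      rfl; push_cast
      ring
    have h2 := (hasSum_nat_add_iff
      (f := fun n : ℕ => ((-2)*π/(1-q^2)) * ((r*q)^n/(n:ℝ))) 1).mp h1
    simpa using h2
  rw [hshift.tsum_eq]
  ring

set_option maxHeartbeats 1000000 in
/-- for every `0 < c < 1`, the logarithmic moment of the
Marchenko–Pastur law satisfies
`(1/(2πc)) ∫_{a(c)}^{b(c)} (log(1+x)/x) √((b(c)−x)(x−a(c))) dx
  = log(1+ϱ(c)) + (−(√c − 1/√c)²(log(1−√(c̃(c)c)) + √(c̃(c)c)) − √(c̃(c))(√c − c^{3/2}))/(1−c)`. -/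
theorem stmt_4 (c : ℝ) (hc0 : 0 < c) (hc1 : c < 1) :
    (1 / (2 * Real.pi * c)) *
        ∫ x in (mpA c)..(mpB c),
          (Real.log (1 + x) / x) * Real.sqrt ((mpB c - x) * (x - mpA c))
      = Real.log (1 + varrho c) +
          (-(Real.sqrt c - 1 / Real.sqrt c) ^ 2 *
              (Real.log (1 - Real.sqrt (ctil c * c)) + Real.sqrt (ctil c * c)) -
            Real.sqrt (ctil c) * (Real.sqrt c - c ^ ((3 : ℝ) / 2))) / (1 - c) := by
  have hπ := Real.pi_pos
  set q := Real.sqrt c with hqdef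
  have hq0 : 0 < q := Real.sqrt_pos.mpr hc0
  have hq1 : q < 1 := by
    rw [hqdef, show (1:ℝ) = Real.sqrt 1 by simp]
    exact Real.sqrt_lt_sqrt hc0.le hc1
  have hq2 : q^2 = c := Real.sq_sqrt hc0.le
  set s := Real.sqrt (c^2+4) with hsdef
  have hs2 : s^2 = c^2+4 := Real.sq_sqrt (by positivity)
  have hs_pos : 0 < s := Real.sqrt_pos.mpr (by positivity)
  have hs_ge : 2 ≤ s := by nlinarith
  set ρ := varrho c with hρdef
  have hρ_eq : ρ = (c + s)/2 := rfl
  have hρ1 : 1 < ρ := by rw [hρ_eq]; nlinarith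
  have hρ_pos : 0 < ρ := by linarith
  have h1ρ : (0:ℝ) < 1 + ρ := by linarith
  have hρ_sq : ρ^2 = q^2*ρ + 1 := by rw [hρ_eq, hq2]; linear_combination hs2/4
  set r := q/(1+ρ) with hrdef
  have hr0 : 0 < r := div_pos hq0 h1ρ
  have hr1 : r < 1 := by rw [hrdef, div_lt_one h1ρ]; linarith
  have hrq1 : r*q < 1 := by nlinarith
  have h1rq : 0 < 1 - r*q := by linarith
  have hq2ne : (1:ℝ) - q^2 ≠ 0 := by nlinarith
  -- identify ctil with r², √(ctil·c) with r·q
  have h2s : 2 + c + s = 2*(1+ρ) := by rw [hρ_eq]; ring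
  have hctil : ctil c = r^2 := by
    rw [ctil, ← hsdef, h2s, hrdef, ← hq2]
    field_simp
    ring
  have hsqrt_ctil : Real.sqrt (ctil c) = r := by rw [hctil, Real.sqrt_sq hr0.le]
  have hsqrt_ctilc : Real.sqrt (ctil c * c) = r*q := by
    rw [hctil, ← hq2, show r^2*q^2 = (r*q)^2 by ring, Real.sqrt_sq (by positivity)]
  have h32 : c ^ ((3:ℝ)/2) = q^3 := by
    have e1 : c ^ ((3:ℝ)/2) = (c ^ ((1:ℝ)/2))^(3:ℕ) := by
      rw [← Real.rpow_natCast (c ^ ((1:ℝ)/2)) 3, ← Real.rpow_mul hc0.le]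
      norm_num
    rw [e1, show c ^ ((1:ℝ)/2) = q by rw [hqdef, Real.sqrt_eq_rpow]]
  -- the substitution map
  set φ : ℝ → ℝ := fun θ => 1 + q^2 - 2*q*Real.cos θ with hφdef
  have hφA : φ 0 = mpA c := by
    simp only [hφdef, Real.cos_zero, mpA, ← hqdef]
    ring
  have hφB : φ π = mpB c := by
    simp only [hφdef, Real.cos_pi, mpB, ← hqdef]
    ring
  have hDq : ∀ θ : ℝ, 0 < 1 - 2*q*Real.cos θ + q^2 := fun θ => D_pos (habs hq0 hq1) θ
  have hDr : ∀ θ : ℝ, 0 < 1 - 2*r*Real.cos θ + r^2 := fun θ => D_pos (habs hr0 hr1) θ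
  have hφpos : ∀ θ : ℝ, 0 < φ θ := by
    intro θ
    have := hDq θ
    simp only [hφdef]
    linarith
  set f : ℝ → ℝ := fun x => Real.log (1 + x) / x * Real.sqrt ((mpB c - x) * (x - mpA c))
    with hfdef
  -- step 1 : substitution
  have e1 : (∫ x in (mpA c)..(mpB c), f x)
      = ∫ θ in (0:ℝ)..π, (2*q*Real.sin θ) • (f ∘ φ) θ := by
    rw [← hφA, ← hφB]
    refine (integral_comp_smul_deriv' (fun θ _ => ?_) (by fun_prop) ?_).symm
    · have h := ((Real.hasDerivAt_cos θ).const_mul (2*q)).const_sub (1+q^2)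
      refine h.congr_deriv ?_
      ring
    · intro x hx
      obtain ⟨θ, _, rfl⟩ := hx
      have hx0 : 0 < φ θ := hφpos θ
      apply ContinuousAt.continuousWithinAt
      have h1 : ContinuousAt (fun x : ℝ => Real.log (1+x)) (φ θ) := by
        have := Real.continuousAt_log (x := 1 + φ θ) (by linarith)
        exact this.comp (by fun_prop)
      exact (h1.div continuousAt_id hx0.ne').mul
        ((Real.continuous_sqrt.continuousAt).comp (by fun_prop))
  -- step 2 : pointwise rewrite
  have e2 : (∫ θ in (0:ℝ)..π, (2*q*Real.sin θ) • (f ∘ φ) θ)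
      = ∫ θ in (0:ℝ)..π, (4*q^2) * ((Real.log (1+ρ) + Real.log (1 - 2*r*Real.cos θ + r^2))
          * (Real.sin θ^2 * (1 - 2*q*Real.cos θ + q^2)⁻¹)) := by
    apply integral_congr
    intro θ hθ
    have hθ' : θ ∈ Set.Icc (0:ℝ) π := by rwa [Set.uIcc_of_le hπ.le] at hθ
    have hsin : 0 ≤ Real.sin θ := Real.sin_nonneg_of_nonneg_of_le_pi hθ'.1 hθ'.2
    have hD := hDq θ
    have hbb : (mpB c - φ θ) * (φ θ - mpA c) = (2*q*Real.sin θ)^2 := by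
      simp only [hφdef, mpB, mpA, ← hqdef]
      linear_combination (-(4*q^2)) * Real.sin_sq_add_cos_sq θ
    have hsqrt : Real.sqrt ((mpB c - φ θ) * (φ θ - mpA c)) = 2*q*Real.sin θ := by
      rw [hbb, Real.sqrt_sq (by positivity)]
    have hfac : 1 + φ θ = (1+ρ) * (1 - 2*r*Real.cos θ + r^2) := by
      simp only [hφdef, hrdef]
      field_simp
      linear_combination (-1 : ℝ) * hρ_sq
    have hφD : φ θ = 1 - 2*q*Real.cos θ + q^2 := by simp only [hφdef]; ring
    show (2*q*Real.sin θ) * (Real.log (1 + φ θ) / φ θ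
        * Real.sqrt ((mpB c - φ θ) * (φ θ - mpA c))) = _
    rw [hsqrt, hfac, Real.log_mul h1ρ.ne' (hDr θ).ne', hφD]
    field_simp
    ring
  -- integrability helpers
  have hcont_logDr : Continuous fun θ => Real.log (1 - 2*r*Real.cos θ + r^2) :=
    Continuous.log (by fun_prop) (fun θ => (hDr θ).ne')
  have hcont_invDq : Continuous fun θ => (1 - 2*q*Real.cos θ + q^2)⁻¹ := cont_invD hq0 hq1
  have hcont_T : Continuous fun θ => Real.sin θ^2 * (1 - 2*q*Real.cos θ + q^2)⁻¹ :=
    (by fun_prop : Continuous fun θ : ℝ => Real.sin θ^2).mul hcont_invDq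
  -- step 3 : split
  have e3 : (∫ θ in (0:ℝ)..π, (4*q^2) * ((Real.log (1+ρ) + Real.log (1 - 2*r*Real.cos θ + r^2))
          * (Real.sin θ^2 * (1 - 2*q*Real.cos θ + q^2)⁻¹)))
      = 4*q^2 * (Real.log (1+ρ)
            * (∫ θ in (0:ℝ)..π, Real.sin θ^2 * (1 - 2*q*Real.cos θ + q^2)⁻¹)
          + ∫ θ in (0:ℝ)..π, Real.log (1 - 2*r*Real.cos θ + r^2)
            * (Real.sin θ^2 * (1 - 2*q*Real.cos θ + q^2)⁻¹)) := by
    rw [integral_const_mul]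
    congr 1
    rw [← integral_const_mul, ← integral_add
      ((continuous_const.fun_mul hcont_T).intervalIntegrable 0 π)
      ((hcont_logDr.fun_mul hcont_T).intervalIntegrable 0 π)]
    apply integral_congr
    intro θ _
    ring
  -- the T-decomposition
  have hTdec : ∀ θ : ℝ, Real.sin θ^2 * (1 - 2*q*Real.cos θ + q^2)⁻¹
      = (1+q^2)/(4*q^2) + (1/(2*q))*Real.cos θ
        + (-(1-q^2)^2/(4*q^2))*(1 - 2*q*Real.cos θ + q^2)⁻¹ := by
    intro θ
    have hD := (hDq θ).ne'
    have hs2' : Real.sin θ^2 = 1 - Real.cos θ^2 := by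
      nlinarith [Real.sin_sq_add_cos_sq θ]
    rw [hs2']
    generalize hD' : (1 - 2*q*Real.cos θ + q^2) = D at hD ⊢
    field_simp
    rw [← hD']
    ring
  -- step 4 : the plain integral
  have e4 : (∫ θ in (0:ℝ)..π, Real.sin θ^2 * (1 - 2*q*Real.cos θ + q^2)⁻¹) = π/2 := by
    simp only [hTdec]
    rw [integral_add (by
        apply IntervalIntegrable.add
        · exact intervalIntegrable_const
        · exact ((by fun_prop : Continuous fun θ : ℝ =>
            (1/(2*q))*Real.cos θ)).intervalIntegrable 0 π)
      ((continuous_const.fun_mul hcont_invDq).intervalIntegrable 0 π),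
      integral_add intervalIntegrable_const
        (((by fun_prop : Continuous fun θ : ℝ =>
            (1/(2*q))*Real.cos θ)).intervalIntegrable 0 π),
      integral_const, integral_const_mul, integral_const_mul, integral_cos, int_C0 hq0 hq1]
    simp only [Real.sin_pi, Real.sin_zero, smul_eq_mul]
    field_simp
    ring
  -- step 5 : the log integral
  have e5 : (∫ θ in (0:ℝ)..π, Real.log (1 - 2*r*Real.cos θ + r^2)
        * (Real.sin θ^2 * (1 - 2*q*Real.cos θ + q^2)⁻¹))
      = (1/(2*q))*(-(π*r)) + (-(1-q^2)^2/(4*q^2))*(2*π/(1 - q^2) * Real.log (1 - r*q)) := by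
    have key : ∀ θ : ℝ, Real.log (1 - 2*r*Real.cos θ + r^2)
        * (Real.sin θ^2 * (1 - 2*q*Real.cos θ + q^2)⁻¹)
        = ((1+q^2)/(4*q^2)) * Real.log (1 - 2*r*Real.cos θ + r^2)
          + (1/(2*q))*(Real.log (1 - 2*r*Real.cos θ + r^2) * Real.cos θ)
          + (-(1-q^2)^2/(4*q^2))*(Real.log (1 - 2*r*Real.cos θ + r^2)
              * (1 - 2*q*Real.cos θ + q^2)⁻¹) := by
      intro θ
      rw [hTdec θ]
      ring
    simp only [key]
    rw [integral_add (IntervalIntegrable.add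
        ((continuous_const.fun_mul hcont_logDr).intervalIntegrable 0 π)
        ((continuous_const.fun_mul (hcont_logDr.fun_mul (by fun_prop : Continuous Real.cos))).intervalIntegrable 0 π))
      ((continuous_const.fun_mul (hcont_logDr.fun_mul hcont_invDq)).intervalIntegrable 0 π),
      integral_add ((continuous_const.fun_mul hcont_logDr).intervalIntegrable 0 π)
        ((continuous_const.fun_mul (hcont_logDr.fun_mul (by fun_prop : Continuous Real.cos))).intervalIntegrable 0 π),
      integral_const_mul, integral_const_mul, integral_const_mul,
      intL0 hr0.le hr1, intL1 hr0.le hr1, intLP hr0.le hr1 hq0 hq1]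
    ring
  -- assemble
  rw [hfdef] at e1
  rw [e1, e2, e3, e4, e5, hsqrt_ctil, hsqrt_ctilc, h32, ← hq2]
  have hq2' : q ≠ 0 := hq0.ne'
  field_simp
  ring
end

section
/- For all real c and s with 0 < c < 1 and 0 ≤ s < 1, one has (1/2) ∫_0^{2π} log(1 + s − 2√s·cos θ) · (c − √c·cos θ) / (1 + c − 2√c·cos θ) dθ = −π · log(1 − √(s·c)). -/
open Real Complex Metric intervalIntegral

lemma cauchy_unit {f : ℂ → ℂ} (hd : DifferentiableOn ℂ f (closedBall 0 1)) {w : ℂ}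
    (hw : w ∈ ball (0:ℂ) 1) :
    ∫ θ in (0:ℝ)..(2*Real.pi), (circleMap 0 1 θ * Complex.I) *
        ((circleMap 0 1 θ - w)⁻¹ * f (circleMap 0 1 θ))
      = 2 * Real.pi * Complex.I * f w := by
  have h := hd.circleIntegral_sub_inv_smul hw
  simp only [circleIntegral, deriv_circleMap, smul_eq_mul] at h
  rw [← h]

lemma cont_comp {f : ℂ → ℂ} (hd : DifferentiableOn ℂ f (closedBall 0 1)) :
    Continuous fun θ : ℝ => f (circleMap 0 1 θ) := by
  apply hd.continuousOn.comp_continuous (continuous_circleMap 0 1)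
  intro θ
  have : circleMap 0 1 θ ∈ sphere (0:ℂ) 1 := circleMap_mem_sphere 0 one_pos.le θ
  exact sphere_subset_closedBall this

lemma mean_unit {f : ℂ → ℂ} (hd : DifferentiableOn ℂ f (closedBall 0 1)) :
    ∫ θ in (0:ℝ)..(2*Real.pi), f (circleMap 0 1 θ) = 2 * Real.pi * f 0 := by
  have h := cauchy_unit hd (mem_ball_self one_pos)
  have hI : ∀ θ : ℝ, (circleMap 0 1 θ * Complex.I) *
      ((circleMap 0 1 θ - 0)⁻¹ * f (circleMap 0 1 θ)) = Complex.I * f (circleMap 0 1 θ) := by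
    intro θ
    have hz : circleMap 0 1 θ ≠ 0 := circleMap_ne_center one_ne_zero
    field_simp
    ring
  simp only [hI] at h
  rw [intervalIntegral.integral_const_mul] at h
  apply mul_left_cancel₀ Complex.I_ne_zero
  rw [h]; ring

lemma pole_unit {f : ℂ → ℂ} (hd : DifferentiableOn ℂ f (closedBall 0 1)) {w : ℂ}
    (hw : w ∈ ball (0:ℂ) 1) (hw0 : w ≠ 0) :
    ∫ θ in (0:ℝ)..(2*Real.pi), (circleMap 0 1 θ - w)⁻¹ * f (circleMap 0 1 θ)
      = 2 * Real.pi * (f w - f 0) / w := by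
  have hzw : ∀ θ : ℝ, circleMap 0 1 θ - w ≠ 0 := by
    intro θ
    have h1 : ‖circleMap 0 1 θ‖ = 1 := by
      simpa using norm_circleMap_zero 1 θ
    have h2 : ‖w‖ < 1 := by simpa [Complex.dist_eq] using hw
    intro hcon
    rw [sub_eq_zero] at hcon
    rw [hcon] at h1
    exact absurd h1 (by linarith)
  have h := cauchy_unit hd hw
  have key : ∀ θ : ℝ, (circleMap 0 1 θ * Complex.I) *
      ((circleMap 0 1 θ - w)⁻¹ * f (circleMap 0 1 θ))
      = Complex.I * f (circleMap 0 1 θ)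
        + (Complex.I * w) * ((circleMap 0 1 θ - w)⁻¹ * f (circleMap 0 1 θ)) := by
    intro θ
    field_simp [hzw θ]
    ring
  simp only [key] at h
  have hcf : Continuous fun θ : ℝ => f (circleMap 0 1 θ) := cont_comp hd
  have hcinv : Continuous fun θ : ℝ => (circleMap 0 1 θ - w)⁻¹ * f (circleMap 0 1 θ) :=
    (((continuous_circleMap 0 1).sub continuous_const).inv₀ hzw).mul hcf
  rw [intervalIntegral.integral_add
      ((show Continuous fun θ : ℝ => Complex.I * f (circleMap 0 1 θ) from
        continuous_const.mul hcf).intervalIntegrable _ _)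
      ((show Continuous fun θ : ℝ => Complex.I * w *
        ((circleMap 0 1 θ - w)⁻¹ * f (circleMap 0 1 θ)) from
        continuous_const.mul hcinv).intervalIntegrable _ _),
    intervalIntegral.integral_const_mul, intervalIntegral.integral_const_mul,
    mean_unit hd] at h
  have hX : Complex.I * (w * ∫ θ in (0:ℝ)..(2*Real.pi),
      (circleMap 0 1 θ - w)⁻¹ * f (circleMap 0 1 θ))
      = Complex.I * (2*Real.pi*f w - 2*Real.pi*f 0) := by linear_combination h
  have hwX := mul_left_cancel₀ Complex.I_ne_zero hX
  rw [eq_div_iff hw0]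
  linear_combination hwX




section helpers

lemma circle_sub_ne {w : ℂ} (hw : w ∈ ball (0:ℂ) 1) (θ : ℝ) : circleMap 0 1 θ - w ≠ 0 := by
  have h1 : ‖circleMap 0 1 θ‖ = 1 := by simp [norm_circleMap_zero]
  have h2 : ‖w‖ < 1 := by simpa [Complex.dist_eq] using hw
  intro hcon
  rw [sub_eq_zero] at hcon
  rw [hcon] at h1
  exact absurd h1 (by linarith)

end helpers

lemma pointwise {a b x y : ℝ} (ha0 : 0 ≤ a) (ha1 : a < 1) (hb0 : 0 < b) (hb1 : b < 1)
    (hxy : x^2 + y^2 = 1) {z : ℂ} (hzx : z.re = x) (hzy : z.im = y) :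
    Real.log (1 + a^2 - 2*a*x) * ((b^2 - b*x) / (1 + b^2 - 2*b*x))
      = -((Complex.log (1 - a*z) * (b*z/(1-b*z))
          + Complex.log (1 - a*z) * (b*(z - b)⁻¹)).re) := by
  have hx1 : x ≤ 1 := by nlinarith [sq_nonneg y]
  have hx2 : -1 ≤ x := by nlinarith [sq_nonneg y]
  have hDb : 0 < 1 + b^2 - 2*b*x := by nlinarith [sq_nonneg (1-b)]
  have hDa : 0 < 1 + a^2 - 2*a*x := by nlinarith [sq_nonneg (1-a)]
  have hzz : z * (starRingEnd ℂ) z = 1 := by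
    rw [Complex.mul_conj]
    norm_cast
    simp [Complex.normSq_apply, hzx, hzy]
    nlinarith [hxy]
  have hnsq1 : Complex.normSq (1 - b*z) = 1 + b^2 - 2*b*x := by
    simp [Complex.normSq_apply, Complex.sub_re, Complex.sub_im, Complex.mul_re, Complex.mul_im,
      hzx, hzy]
    nlinarith [hxy]
  have hnsqa : Complex.normSq (1 - a*z) = 1 + a^2 - 2*a*x := by
    simp [Complex.normSq_apply, Complex.sub_re, Complex.sub_im, Complex.mul_re, Complex.mul_im,
      hzx, hzy]
    nlinarith [hxy]
  have h1bz : (1:ℂ) - b*z ≠ 0 := by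
    intro hcon
    rw [hcon] at hnsq1
    simp at hnsq1
    linarith
  have hzb : z - (b:ℂ) ≠ 0 := by
    intro hcon
    have hnsq2 : Complex.normSq (z - b) = 1 + b^2 - 2*b*x := by
      simp [Complex.normSq_apply, Complex.sub_re, Complex.sub_im, hzx, hzy]
      nlinarith [hxy]
    rw [hcon] at hnsq2
    simp at hnsq2
    linarith
  have h1bzc : (1:ℂ) - b * (starRingEnd ℂ) z ≠ 0 := by
    intro hcon
    apply h1bz
    have := congrArg (starRingEnd ℂ) hcon
    simpa using this
  have hconj : (b:ℂ) * (z - b)⁻¹ = (starRingEnd ℂ) ((b:ℂ)*z/(1-b*z)) := by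
    rw [map_div₀, map_mul, map_sub, map_mul, map_one, Complex.conj_ofReal]
    rw [mul_inv_eq_iff_eq_mul₀ hzb, div_mul_eq_mul_div, eq_div_iff h1bzc]
    linear_combination (-(b:ℂ)^2 * (starRingEnd ℂ) z) * hzz + ((b:ℂ)) * hzz + ((b:ℂ)^2 * (starRingEnd ℂ) z - 2*(b:ℂ)) * hzz
  have wre : ((b:ℂ)*z/(1-b*z)).re = (b*x - b^2)/(1 + b^2 - 2*b*x) := by
    rw [Complex.div_re, hnsq1]
    simp [Complex.sub_re, Complex.sub_im, Complex.mul_re, Complex.mul_im, hzx, hzy]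
    rw [← add_div]
    congr 1
    nlinarith [hxy]
  have lre : (Complex.log (1 - a*z)).re = Real.log (1 + a^2 - 2*a*x) / 2 := by
    rw [Complex.log_re]
    have habs : ‖1 - a*z‖ ^ 2 = 1 + a^2 - 2*a*x := by
      rw [Complex.sq_norm]; exact hnsqa
    rw [← habs, Real.log_pow]
    push_cast; ring
  rw [hconj, ← mul_add, Complex.add_conj, wre]
  rw [show ∀ (L:ℂ) (r:ℝ), (L * (r:ℂ)).re = L.re * r from fun L r => by
    simp [Complex.mul_re]]
  rw [lre]
  ring


/-- For all real `c, s` with `0 < c < 1` and `0 ≤ s < 1`,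
`(1/2) ∫_0^{2π} log(1 + s − 2√s·cos θ) · (c − √c·cos θ)/(1 + c − 2√c·cos θ) dθ
  = −π · log(1 − √(s·c))`. -/
theorem stmt_8 (c s : ℝ) (hc0 : 0 < c) (hc1 : c < 1) (hs0 : 0 ≤ s) (hs1 : s < 1) :
    (1 / 2) * ∫ θ in (0:ℝ)..(2 * Real.pi),
        Real.log (1 + s - 2 * Real.sqrt s * Real.cos θ) *
          ((c - Real.sqrt c * Real.cos θ) / (1 + c - 2 * Real.sqrt c * Real.cos θ))
      = -Real.pi * Real.log (1 - Real.sqrt (s * c)) := by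
  set a := Real.sqrt s with ha_def
  set b := Real.sqrt c with hb_def
  have ha0 : 0 ≤ a := Real.sqrt_nonneg s
  have has : a^2 = s := Real.sq_sqrt hs0
  have hbc : b^2 = c := Real.sq_sqrt hc0.le
  have hb0 : 0 < b := Real.sqrt_pos.mpr hc0
  have ha1 : a < 1 := by nlinarith
  have hb1 : b < 1 := by nlinarith
  -- differentiability of the building blocks on the closed unit ball
  have hzre : ∀ z ∈ closedBall (0:ℂ) 1, |z.re| ≤ 1 := by
    intro z hz
    have h1 := Complex.abs_re_le_norm z
    have h2 : ‖z‖ ≤ 1 := by simpa [Complex.dist_eq] using mem_closedBall.mp hz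
    linarith
  have hslit : ∀ z ∈ closedBall (0:ℂ) 1, (1 - (a:ℂ)*z) ∈ Complex.slitPlane := by
    intro z hz
    rw [Complex.mem_slitPlane_iff]
    left
    have := hzre z hz
    have h3 := abs_le.mp this
    simp only [Complex.sub_re, Complex.one_re, Complex.mul_re, Complex.ofReal_re,
      Complex.ofReal_im, zero_mul, sub_zero]
    nlinarith [h3.1, h3.2]
  have h1bz : ∀ z ∈ closedBall (0:ℂ) 1, (1:ℂ) - (b:ℂ)*z ≠ 0 := by
    intro z hz hcon
    have h2 : ‖z‖ ≤ 1 := by simpa [Complex.dist_eq] using mem_closedBall.mp hz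
    have h4 : (b:ℂ)*z = 1 := by linear_combination -hcon
    have h5 : ‖(b:ℂ)*z‖ = 1 := by rw [h4]; simp
    rw [norm_mul, Complex.norm_real, Real.norm_eq_abs, _root_.abs_of_nonneg hb0.le] at h5
    nlinarith
  have hF : DifferentiableOn ℂ (fun z => Complex.log (1 - (a:ℂ)*z)) (closedBall 0 1) := by
    apply DifferentiableOn.clog
    · exact (differentiable_const (1:ℂ)).differentiableOn.sub
        ((differentiable_const _).mul differentiable_id).differentiableOn
    · exact hslit
  have hG : DifferentiableOn ℂ (fun z => (b:ℂ)*z/(1 - (b:ℂ)*z)) (closedBall 0 1) := by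
    apply DifferentiableOn.div
    · exact ((differentiable_const _).mul differentiable_id).differentiableOn
    · exact (differentiable_const (1:ℂ)).differentiableOn.sub
        ((differentiable_const _).mul differentiable_id).differentiableOn
    · exact h1bz
  have hFG : DifferentiableOn ℂ
      (fun z => Complex.log (1 - (a:ℂ)*z) * ((b:ℂ)*z/(1 - (b:ℂ)*z))) (closedBall 0 1) :=
    hF.mul hG
  -- b as a point of the unit ball
  have hbmem : ((b:ℂ)) ∈ ball (0:ℂ) 1 := by
    simp only [mem_ball, Complex.dist_eq, sub_zero, Complex.norm_real, Real.norm_eq_abs]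
    rwa [_root_.abs_of_nonneg hb0.le]
  have hbne : ((b:ℂ)) ≠ 0 := Complex.ofReal_ne_zero.mpr hb0.ne'
  -- the two complex integrals
  have hIFG : (∫ θ in (0:ℝ)..(2*Real.pi),
      Complex.log (1 - (a:ℂ)*circleMap 0 1 θ) *
        ((b:ℂ)*circleMap 0 1 θ/(1 - (b:ℂ)*circleMap 0 1 θ))) = 0 := by
    have := mean_unit hFG
    simpa using this
  have hIpole : (∫ θ in (0:ℝ)..(2*Real.pi),
      (circleMap 0 1 θ - (b:ℂ))⁻¹ * Complex.log (1 - (a:ℂ)*circleMap 0 1 θ))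
      = 2 * Real.pi * Complex.log (1 - (a:ℂ)*(b:ℂ)) / (b:ℂ) := by
    have := pole_unit hF hbmem hbne
    simpa using this
  -- continuity facts
  have hcF : Continuous fun θ : ℝ => Complex.log (1 - (a:ℂ)*circleMap 0 1 θ) := cont_comp hF
  have hcG : Continuous fun θ : ℝ => (b:ℂ)*circleMap 0 1 θ/(1 - (b:ℂ)*circleMap 0 1 θ) :=
    cont_comp hG
  have hzw := circle_sub_ne hbmem
  have hcpole : Continuous fun θ : ℝ => Complex.log (1 - (a:ℂ)*circleMap 0 1 θ) *
      ((b:ℂ) * (circleMap 0 1 θ - (b:ℂ))⁻¹) :=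
    hcF.mul (continuous_const.mul
      (((continuous_circleMap 0 1).sub continuous_const).inv₀ hzw))
  -- the full complex integral
  have hH : (∫ θ in (0:ℝ)..(2*Real.pi),
      (Complex.log (1 - (a:ℂ)*circleMap 0 1 θ) *
          ((b:ℂ)*circleMap 0 1 θ/(1 - (b:ℂ)*circleMap 0 1 θ))
        + Complex.log (1 - (a:ℂ)*circleMap 0 1 θ) *
          ((b:ℂ) * (circleMap 0 1 θ - (b:ℂ))⁻¹)))
      = 2*(Real.pi:ℂ)*Complex.log (1 - (a:ℂ)*(b:ℂ)) := by
    rw [intervalIntegral.integral_add ((show Continuous fun θ : ℝ =>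
        Complex.log (1 - (a:ℂ)*circleMap 0 1 θ) *
          ((b:ℂ)*circleMap 0 1 θ/(1 - (b:ℂ)*circleMap 0 1 θ)) from
        hcF.mul hcG).intervalIntegrable _ _)
      (hcpole.intervalIntegrable _ _), hIFG]
    have hcomm : ∀ θ:ℝ, Complex.log (1 - (a:ℂ)*circleMap 0 1 θ) *
        ((b:ℂ) * (circleMap 0 1 θ - (b:ℂ))⁻¹)
        = (b:ℂ) * ((circleMap 0 1 θ - (b:ℂ))⁻¹ *
            Complex.log (1 - (a:ℂ)*circleMap 0 1 θ)) := fun θ => by ring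
    simp only [hcomm]
    rw [intervalIntegral.integral_const_mul, hIpole]
    field_simp
    ring
  -- pointwise identity between the real integrand and -(Re of complex integrand)
  have hkey : ∀ θ : ℝ, Real.log (1 + s - 2*a*Real.cos θ) *
      ((c - b*Real.cos θ)/(1+c-2*b*Real.cos θ))
      = -((Complex.log (1 - (a:ℂ)*circleMap 0 1 θ) *
            ((b:ℂ)*circleMap 0 1 θ/(1 - (b:ℂ)*circleMap 0 1 θ))
          + Complex.log (1 - (a:ℂ)*circleMap 0 1 θ) *
            ((b:ℂ) * ((circleMap 0 1 θ - (b:ℂ))⁻¹))).re) := by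
    intro θ
    have hzx : (circleMap 0 1 θ).re = Real.cos θ := by
      simp [circleMap, Complex.exp_ofReal_mul_I_re]
    have hzy : (circleMap 0 1 θ).im = Real.sin θ := by
      simp [circleMap, Complex.exp_ofReal_mul_I_im]
    have hpt := pointwise ha0 ha1 hb0 hb1 (Real.cos_sq_add_sin_sq θ) hzx hzy
    rw [has, hbc] at hpt
    exact hpt
  have hcongr : (∫ θ in (0:ℝ)..(2*Real.pi), Real.log (1 + s - 2*a*Real.cos θ) *
      ((c - b*Real.cos θ)/(1+c-2*b*Real.cos θ)))
      = ∫ θ in (0:ℝ)..(2*Real.pi),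
        -((Complex.log (1 - (a:ℂ)*circleMap 0 1 θ) *
            ((b:ℂ)*circleMap 0 1 θ/(1 - (b:ℂ)*circleMap 0 1 θ))
          + Complex.log (1 - (a:ℂ)*circleMap 0 1 θ) *
            ((b:ℂ) * ((circleMap 0 1 θ - (b:ℂ))⁻¹))).re) :=
    intervalIntegral.integral_congr (fun θ _ => hkey θ)
  rw [hcongr, intervalIntegral.integral_neg]
  have hHre : (∫ θ in (0:ℝ)..(2*Real.pi),
      ((Complex.log (1 - (a:ℂ)*circleMap 0 1 θ) *
          ((b:ℂ)*circleMap 0 1 θ/(1 - (b:ℂ)*circleMap 0 1 θ))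
        + Complex.log (1 - (a:ℂ)*circleMap 0 1 θ) *
          ((b:ℂ) * ((circleMap 0 1 θ - (b:ℂ))⁻¹))).re))
      = (∫ θ in (0:ℝ)..(2*Real.pi),
        (Complex.log (1 - (a:ℂ)*circleMap 0 1 θ) *
            ((b:ℂ)*circleMap 0 1 θ/(1 - (b:ℂ)*circleMap 0 1 θ))
          + Complex.log (1 - (a:ℂ)*circleMap 0 1 θ) *
            ((b:ℂ) * ((circleMap 0 1 θ - (b:ℂ))⁻¹)))).re := by
    have := Complex.reCLM.intervalIntegral_comp_comm
      (((hcF.mul hcG).add hcpole).intervalIntegrable (μ := MeasureTheory.volume) (0:ℝ) (2*Real.pi))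
    simpa using this
  rw [hHre, hH]
  have hab : (1:ℂ) - (a:ℂ)*(b:ℂ) = ((1 - a*b : ℝ) : ℂ) := by push_cast; ring
  rw [hab]
  have hre : (2*(Real.pi:ℂ)*Complex.log ((1 - a*b : ℝ):ℂ)).re
      = 2*Real.pi*Real.log (1-a*b) := by
    have h2pi : (2*(Real.pi:ℂ)) = ((2*Real.pi : ℝ):ℂ) := by push_cast; ring
    rw [h2pi, Complex.re_ofReal_mul, Complex.log_ofReal_re]
  rw [hre]
  have hsc : Real.sqrt (s*c) = a*b := Real.sqrt_mul hs0 c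
  rw [hsc]
  ring
end

section
/- For every 0 < c < 1, the Marchenko–Pastur law with ratio c satisfies (1/(2πc)) ∫_{a(c)}^{b(c)} √((b(c)−x)(x−a(c))) / (1+x) dx = 1 / (1 + ϱ(c)). -/
open Real

open Set in
set_option maxHeartbeats 1000000 in
lemma key_integral (a b : ℝ) (ha : -1 < a) (hab : a < b) :
    ∫ x in a..b, Real.sqrt ((b - x) * (x - a)) / (1 + x)
      = Real.pi * ((a + b + 2) / 2 - Real.sqrt ((1 + a) * (1 + b))) := by
  have h1a : (0:ℝ) < 1 + a := by linarith
  have h1b : (0:ℝ) < 1 + b := by linarith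
  have hba : (0:ℝ) < b - a := by linarith
  set m : ℝ := (a + b + 2) / 2 with hm
  set d : ℝ := Real.sqrt ((1 + a) * (1 + b)) with hd
  have hd0 : 0 < d := Real.sqrt_pos.mpr (by positivity)
  have hd2 : d ^ 2 = (1 + a) * (1 + b) := Real.sq_sqrt (by positivity)
  set F : ℝ → ℝ := fun x =>
    Real.sqrt ((b - x) * (x - a)) + m * Real.arcsin ((2*x - a - b) / (b - a))
      + d * Real.arcsin ((2*d^2 - 2*m*(x+1)) / ((b - a) * (x + 1))) with hF
  have hderiv : ∀ x ∈ Ioo a b,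
      HasDerivAt F (Real.sqrt ((b - x) * (x - a)) / (1 + x)) x := by
    intro x hx
    obtain ⟨hxa, hxb⟩ := hx
    have hR : 0 < (b - x) * (x - a) := mul_pos (by linarith) (by linarith)
    have hx1 : 0 < x + 1 := by linarith
    set s : ℝ := Real.sqrt ((b - x) * (x - a)) with hs
    have hs0 : 0 < s := Real.sqrt_pos.mpr hR
    have hs2 : s ^ 2 = (b - x) * (x - a) := Real.sq_sqrt hR.le
    -- piece 1 : sqrt
    have h1 : HasDerivAt (fun y => Real.sqrt ((b - y) * (y - a)))
        ((a + b - 2*x) / (2 * s)) x := by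
      have hpoly : HasDerivAt (fun y => (b - y) * (y - a)) (a + b - 2*x) x := by
        have h := (((hasDerivAt_id x).const_sub b).mul ((hasDerivAt_id x).sub_const a))
        simp only [id_eq] at h
        exact h.congr_deriv (by ring)
      simpa [hs] using hpoly.sqrt hR.ne'
    -- u
    set u : ℝ := (2*x - a - b) / (b - a) with hu
    have hu1 : -1 < u := by rw [hu, lt_div_iff₀ hba]; linarith
    have hu2 : u < 1 := by rw [hu, div_lt_one hba]; linarith
    have hsu : Real.sqrt (1 - u^2) = 2*s/(b-a) := by
      rw [show 1 - u^2 = (2*s/(b-a))^2 by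
        rw [hu, div_pow, div_pow, eq_div_iff (by positivity : (b-a)^2 ≠ 0), sub_mul, one_mul,
          div_mul_cancel₀ _ (by positivity : (b-a)^2 ≠ 0)]
        linear_combination (-4) * hs2]
      exact Real.sqrt_sq (by positivity)
    have harcu : HasDerivAt (fun y => Real.arcsin ((2*y - a - b) / (b - a)))
        ((1 / Real.sqrt (1 - u^2)) * (2/(b-a))) x := by
      have hlin : HasDerivAt (fun y => (2*y - a - b) / (b - a)) (2/(b-a)) x := by
        have h := (((hasDerivAt_id x).const_mul 2).sub_const (a + b)).div_const (b - a)
        simp only [id_eq] at h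
        convert h using 2 <;> first | rfl | ring
      exact (Real.hasDerivAt_arcsin hu1.ne' hu2.ne).comp x hlin
    -- v
    set v : ℝ := (2*d^2 - 2*m*(x+1)) / ((b - a) * (x + 1)) with hv
    have hden : ((b - a) * (x + 1)) ≠ 0 := by positivity
    have hvD : v * ((b - a) * (x + 1)) = 2*d^2 - 2*m*(x+1) := by
      rw [hv, div_mul_cancel₀ _ hden]
    have h1v : 1 - v^2 = (2*d*s/((b-a)*(x+1)))^2 := by
      have hid : ((b-a)*(x+1))^2 - (2*d^2 - 2*m*(x+1))^2 = 4*d^2*((b-x)*(x-a)) := by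
        rw [hd2, hm]; ring
      have h2 : (2*d*s/((b-a)*(x+1)))^2 = (2*d*s)^2/((b-a)*(x+1))^2 := div_pow _ _ _
      rw [h2, eq_div_iff (pow_ne_zero 2 hden)]
      linear_combination hid - (v*((b-a)*(x+1)) + (2*d^2 - 2*m*(x+1))) * hvD - 4*d^2*hs2
    have hsv : Real.sqrt (1 - v^2) = 2*d*s/((b-a)*(x+1)) := by
      rw [h1v]; exact Real.sqrt_sq (by positivity)
    have hv2 : v^2 < 1 := by
      nlinarith [h1v, pow_pos (div_pos (by positivity : (0:ℝ) < 2*d*s)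
        (by positivity : (0:ℝ) < (b-a)*(x+1))) 2]
    have hv1 : -1 < v := by nlinarith [hv2, sq_nonneg (v+1)]
    have hv1' : v < 1 := by nlinarith [hv2, sq_nonneg (v-1)]
    have hvd : HasDerivAt (fun y => (2*d^2 - 2*m*(y+1)) / ((b - a) * (y + 1)))
        (-2*d^2/((b-a)*(x+1)^2)) x := by
      have hN : HasDerivAt (fun y => 2*d^2 - 2*m*(y+1)) (-(2*m)) x := by
        have h := (((hasDerivAt_id x).add_const 1).const_mul (2*m)).const_sub (2*d^2)
        simp only [id_eq] at h
        exact h.congr_deriv (by ring)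
      have hD : HasDerivAt (fun y => (b - a) * (y + 1)) (b - a) x := by
        have h := ((hasDerivAt_id x).add_const 1).const_mul (b - a)
        simp only [id_eq] at h
        exact h.congr_deriv (by ring)
      have h := hN.div hD hden
      refine h.congr_deriv (Eq.symm ?_)
      rw [div_eq_div_iff (by positivity) (by positivity : ((b-a)*(x+1))^2 ≠ 0)]
      ring
    have harcv : HasDerivAt
        (fun y => Real.arcsin ((2*d^2 - 2*m*(y+1)) / ((b - a) * (y + 1))))
        ((1 / Real.sqrt (1 - v^2)) * (-2*d^2/((b-a)*(x+1)^2))) x :=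
      by exact (Real.hasDerivAt_arcsin hv1.ne' hv1'.ne).comp x hvd
    have htot := (h1.add (harcu.const_mul m)).add (harcv.const_mul d)
    refine htot.congr_deriv (Eq.symm ?_)
    rw [hsu, hsv]
    rw [div_eq_iff (show (1:ℝ) + x ≠ 0 by intro h; linarith)]
    field_simp
    linear_combination 2*(x+1)*hs2 + 2*(x+1)*hd2
      - 2*(x+1)^2*hm
  have hFc : ContinuousOn F (Icc a b) := by
    apply ContinuousOn.add
    apply ContinuousOn.add
    · exact (Real.continuous_sqrt.comp (by continuity)).continuousOn
    · exact continuousOn_const.mul (Real.continuous_arcsin.comp_continuousOn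
        ((by fun_prop : Continuous fun x : ℝ => 2*x - a - b).continuousOn.div_const _))
    · apply continuousOn_const.mul
      apply Real.continuous_arcsin.comp_continuousOn
      apply ContinuousOn.div
      · exact (by fun_prop : Continuous fun x : ℝ => 2*d^2 - 2*m*(x+1)).continuousOn
      · exact (by fun_prop : Continuous fun x : ℝ => (b - a) * (x + 1)).continuousOn
      · intro x hx
        have hax : a ≤ x := hx.1
        have : 0 < x + 1 := by linarith
        positivity
  have hint : IntervalIntegrable (fun x => Real.sqrt ((b - x) * (x - a)) / (1 + x))
      MeasureTheory.volume a b := by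
    apply ContinuousOn.intervalIntegrable
    apply ContinuousOn.div
    · exact (Real.continuous_sqrt.comp (by continuity)).continuousOn
    · exact (continuous_const.add continuous_id).continuousOn
    · intro x hx
      rw [uIcc_of_le hab.le] at hx
      have : -1 < x := lt_of_lt_of_le ha hx.1
      intro h; linarith [h]
  rw [intervalIntegral.integral_eq_sub_of_hasDerivAt_of_le hab.le hFc hderiv hint]
  have ea1 : (2*a - a - b) / (b - a) = -1 := by
    rw [div_eq_iff hba.ne']; ring
  have eb1 : (2*b - a - b) / (b - a) = 1 := by
    rw [div_eq_iff hba.ne']; ring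
  have ea2 : (2*d^2 - 2*m*(a+1)) / ((b - a) * (a + 1)) = 1 := by
    rw [hd2, hm, div_eq_iff (mul_pos hba (by linarith : (0:ℝ) < a + 1)).ne']; ring
  have eb2 : (2*d^2 - 2*m*(b+1)) / ((b - a) * (b + 1)) = -1 := by
    rw [hd2, hm, div_eq_iff (mul_pos hba (by linarith : (0:ℝ) < b + 1)).ne']; ring
  have Fb : F b = m * (Real.pi/2) - d * (Real.pi/2) := by
    rw [hF]; simp only
    rw [eb1, eb2, Real.arcsin_one, Real.arcsin_neg_one,
      show (b - b) * (b - a) = 0 by ring, Real.sqrt_zero]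
    ring
  have Fa : F a = -(m * (Real.pi/2)) + d * (Real.pi/2) := by
    rw [hF]; simp only
    rw [ea1, ea2, Real.arcsin_one, Real.arcsin_neg_one,
      show (b - a) * (a - a) = 0 by ring, Real.sqrt_zero]
    ring
  rw [Fb, Fa, hm, hd]
  ring

/-- for every `0 < c < 1`, the Marchenko–Pastur law with ratio `c`
satisfies `(1/(2πc)) ∫_{a(c)}^{b(c)} √((b(c)−x)(x−a(c)))/(1+x) dx = 1/(1+ϱ(c))`. -/
theorem stmt_9 (c : ℝ) (hc0 : 0 < c) (hc1 : c < 1) :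
    (1 / (2 * Real.pi * c)) *
        ∫ x in (mpA c)..(mpB c), Real.sqrt ((mpB c - x) * (x - mpA c)) / (1 + x)
      = 1 / (1 + varrho c) := by
  have hsc2 : Real.sqrt c ^ 2 = c := Real.sq_sqrt hc0.le
  have hsc0 : 0 < Real.sqrt c := Real.sqrt_pos.mpr hc0
  have ha : (-1:ℝ) < mpA c := lt_of_lt_of_le (by norm_num) (sq_nonneg _)
  have hab : mpA c < mpB c := by unfold mpA mpB; nlinarith
  rw [key_integral (mpA c) (mpB c) ha hab]
  have h1 : (1 + mpA c) * (1 + mpB c) = c^2 + 4 := by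
    unfold mpA mpB; linear_combination (Real.sqrt c^2 + c) * hsc2
  have h2 : (mpA c + mpB c + 2)/2 = 2 + c := by
    unfold mpA mpB; linear_combination hsc2
  rw [h1, h2]
  have hs42 : Real.sqrt (c^2+4) ^ 2 = c^2+4 := Real.sq_sqrt (by positivity)
  have hs40 : 0 < Real.sqrt (c^2+4) := Real.sqrt_pos.mpr (by positivity)
  have hpi : (0:ℝ) < Real.pi := Real.pi_pos
  unfold varrho
  have hden : (0:ℝ) < 1 + (c + Real.sqrt (c^2+4))/2 := by positivity
  field_simp
  linear_combination (-1) * hs42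
end

section
/- For every real c > 0, one has (1/2) ∫_0^{2π} (c − √c·cos θ) / (2 + c − 2√c·cos θ) dθ = π/2 + π(c − 2) / ( 2 (1 + ϱ(c)) (1 − c̃(c)) ). -/
open Real

lemma arctan_part_deriv (r : ℝ) (hr0 : 0 < r) (hr1 : r < 1) (θ : ℝ) :
    HasDerivAt (fun x => Real.arctan (r * Real.sin x / (1 - r * Real.cos x)))
      ((r * Real.cos θ - r ^ 2) / (1 - 2 * r * Real.cos θ + r ^ 2)) θ := by
  have hd : (0:ℝ) < 1 - r * Real.cos θ := by
    nlinarith [Real.cos_le_one θ, Real.neg_one_le_cos θ]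
  have hD : (0:ℝ) < 1 - 2 * r * Real.cos θ + r ^ 2 := by
    nlinarith [Real.cos_le_one θ]
  have hpyth : Real.sin θ ^ 2 + Real.cos θ ^ 2 = 1 := Real.sin_sq_add_cos_sq θ
  have hn : HasDerivAt (fun x => r * Real.sin x) (r * Real.cos θ) θ :=
    (Real.hasDerivAt_sin θ).const_mul r
  have hden : HasDerivAt (fun x => 1 - r * Real.cos x) (r * Real.sin θ) θ := by
    have := ((Real.hasDerivAt_cos θ).const_mul r).const_sub 1
    simpa using this
  have hu : HasDerivAt (fun x => r * Real.sin x / (1 - r * Real.cos x))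
      ((r * Real.cos θ * (1 - r * Real.cos θ) - r * Real.sin θ * (r * Real.sin θ)) /
        (1 - r * Real.cos θ) ^ 2) θ := hn.div hden hd.ne'
  have h := (Real.hasDerivAt_arctan (r * Real.sin θ / (1 - r * Real.cos θ))).comp θ hu
  refine h.congr_deriv ?_
  have hnum : r * Real.cos θ * (1 - r * Real.cos θ) - r * Real.sin θ * (r * Real.sin θ)
      = r * Real.cos θ - r ^ 2 := by linear_combination (-(r ^ 2)) * hpyth
  have hden2 : 1 + (r * Real.sin θ / (1 - r * Real.cos θ)) ^ 2
      = (1 - 2 * r * Real.cos θ + r ^ 2) / (1 - r * Real.cos θ) ^ 2 := by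
    field_simp
    linear_combination (r ^ 2) * hpyth
  rw [hnum, hden2]
  rw [one_div, inv_div]
  field_simp

/-- For every real `c > 0`,
`(1/2) ∫_0^{2π} (c − √c·cos θ)/(2 + c − 2√c·cos θ) dθ
  = π/2 + π(c − 2)/(2(1 + ϱ(c))(1 − c̃(c)))`. -/
theorem stmt_10 (c : ℝ) (hc : 0 < c) :
    (1 / 2) * ∫ θ in (0:ℝ)..(2 * Real.pi),
        (c - Real.sqrt c * Real.cos θ) / (2 + c - 2 * Real.sqrt c * Real.cos θ)
      = Real.pi / 2 + Real.pi * (c - 2) / (2 * (1 + varrho c) * (1 - ctil c)) := by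
  set b := Real.sqrt c with hb
  set s := Real.sqrt (c ^ 2 + 4) with hsdef
  have hb0 : 0 < b := Real.sqrt_pos.mpr hc
  have hb2 : b ^ 2 = c := Real.sq_sqrt hc.le
  have hs2 : s ^ 2 = c ^ 2 + 4 := Real.sq_sqrt (by positivity)
  have hs0 : 0 < s := Real.sqrt_pos.mpr (by positivity)
  have has : (0:ℝ) < 2 + c + s := by positivity
  obtain ⟨r, hrp, hr0, hr1⟩ :
      ∃ r : ℝ, r * (2 + c + s) = 2 * b ∧ 0 < r ∧ r < 1 := by
    refine ⟨2 * b / (2 + c + s), by field_simp, by positivity, ?_⟩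
    rw [div_lt_one has]
    nlinarith [sq_nonneg (b - 1)]
  -- antiderivative
  set F : ℝ → ℝ := fun θ =>
    θ / 2 + (c - 2) / (2 * s) * (θ + 2 * Real.arctan (r * Real.sin θ / (1 - r * Real.cos θ)))
    with hF
  have hderiv : ∀ θ ∈ Set.uIcc (0:ℝ) (2 * Real.pi),
      HasDerivAt F ((c - b * Real.cos θ) / (2 + c - 2 * b * Real.cos θ)) θ := by
    intro θ _
    have h1 := arctan_part_deriv r hr0 hr1 θ
    have h2 : HasDerivAt F
        (1 / 2 + (c - 2) / (2 * s) *
          (1 + 2 * ((r * Real.cos θ - r ^ 2) / (1 - 2 * r * Real.cos θ + r ^ 2)))) θ := by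
      apply HasDerivAt.add
      · simpa using (hasDerivAt_id θ).div_const 2
      · exact (((hasDerivAt_id θ).add ((h1.const_mul 2))).const_mul _)
    convert h2 using 1
    have hD : (0:ℝ) < 1 - 2 * r * Real.cos θ + r ^ 2 := by
      nlinarith [Real.cos_le_one θ]
    have hDen : (0:ℝ) < 2 + c - 2 * b * Real.cos θ := by
      nlinarith [Real.cos_le_one θ, sq_nonneg (b - 1)]
    have key_mul : (s * (1 - 2 * r * Real.cos θ + r ^ 2)) * (2 + c + s) ^ 2
        = ((1 - r ^ 2) * (2 + c - 2 * b * Real.cos θ)) * (2 + c + s) ^ 2 := by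
      linear_combination (s + 2 + c - 2 * b * Real.cos θ) * hs2 +
        (-2 * s * (2 + c + s) * Real.cos θ +
          (s + 2 + c - 2 * b * Real.cos θ) * (r * (2 + c + s) + 2 * b)) * hrp +
        (4 * s - 8 * b * Real.cos θ + 4 * c + 8) * hb2
    have key : s * (1 - 2 * r * Real.cos θ + r ^ 2)
        = (1 - r ^ 2) * (2 + c - 2 * b * Real.cos θ) :=
      mul_right_cancel₀ (pow_ne_zero 2 has.ne') key_mul
    have stepA : 1 + 2 * ((r * Real.cos θ - r ^ 2) / (1 - 2 * r * Real.cos θ + r ^ 2))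
        = (1 - r ^ 2) / (1 - 2 * r * Real.cos θ + r ^ 2) := by
      field_simp
      ring
    rw [stepA]
    have hq : (1 - r ^ 2) / (1 - 2 * r * Real.cos θ + r ^ 2) = s / (2 + c - 2 * b * Real.cos θ) := by
      rw [div_eq_div_iff hD.ne' hDen.ne']
      linear_combination -key
    rw [hq]
    have e : (c - 2) / (2 * s) * (s / (2 + c - 2 * b * Real.cos θ)) = (c - 2) / 2 / (2 + c - 2 * b * Real.cos θ) := by
      field_simp
    rw [e, div_add_div _ _ (by norm_num) hDen.ne', div_eq_div_iff hDen.ne' (by positivity)]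
    ring
  have hint : (∫ θ in (0:ℝ)..(2 * Real.pi),
      (c - b * Real.cos θ) / (2 + c - 2 * b * Real.cos θ)) = F (2 * Real.pi) - F 0 := by
    apply intervalIntegral.integral_eq_sub_of_hasDerivAt hderiv
    apply ContinuousOn.intervalIntegrable
    apply ContinuousOn.div (by fun_prop) (by fun_prop)
    intro θ _
    have : (0:ℝ) < 2 + c - 2 * b * Real.cos θ := by
      nlinarith [Real.cos_le_one θ, sq_nonneg (b - 1)]
    exact this.ne'
  have hF2π : F (2 * Real.pi) = Real.pi + (c - 2) / (2 * s) * (2 * Real.pi) := by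
    simp [hF, Real.sin_two_pi, Real.cos_two_pi]
  have hF0 : F 0 = 0 := by simp [hF]
  -- denominator identity
  have hden : 2 * (1 + varrho c) * (1 - ctil c) = 2 * s := by
    rw [varrho, ctil, ← hsdef]
    field_simp
    linear_combination (-(s + c + 2)) * hs2
  rw [hint, hF2π, hF0, hden]
  field_simp
  ring
end

section
/- For every real c > 0, one has (1/(2πi)) ∮_{|z|=1} log(1 + |1 + √c·z|²) / z dz = log(2 + c) − Σ_{k=1}^∞ ( √c/(2+c) )^{2k} · (2k−1)! / (k!)², where the series on the right converges absolutely. -/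
open Real intervalIntegral MeasureTheory Finset


-- helper lemmas, test compile
lemma cb_succ_prod (k : ℕ) :
    ∏ i ∈ Finset.range k, ((2*(i:ℝ)+1)/(2*(i:ℝ)+2)) = (Nat.centralBinom k : ℝ) / 4^k := by
  induction k with
  | zero => simp
  | succ n ih =>
    rw [Finset.prod_range_succ, ih]
    have hrec := Nat.succ_mul_centralBinom_succ n
    have hrec' : ((n:ℝ)+1) * (Nat.centralBinom (n+1) : ℝ)
        = 2*(2*(n:ℝ)+1) * (Nat.centralBinom n : ℝ) := by exact_mod_cast hrec
    have h4 : (4:ℝ)^(n+1) = 4 * 4^n := by ring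
    have h4n : (4:ℝ)^n ≠ 0 := by positivity
    field_simp [h4]
    linear_combination (-2*(4:ℝ)^n) * hrec'

lemma cos_even_int (k : ℕ) :
    ∫ x in (0:ℝ)..(2*π), Real.cos x ^ (2*k) = 2*π * ((Nat.centralBinom k : ℝ) / 4^k) := by
  induction k with
  | zero => simp
  | succ n ih =>
    have h := integral_cos_pow (a := 0) (b := 2*π) (2*n)
    have h2 : 2*(n+1) = 2*n + 2 := by ring
    rw [h2, h, Real.sin_two_pi, ih]
    have hrec := Nat.succ_mul_centralBinom_succ n
    have hrec' : ((n:ℝ)+1) * (Nat.centralBinom (n+1) : ℝ)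
        = 2*(2*(n:ℝ)+1) * (Nat.centralBinom n : ℝ) := by exact_mod_cast hrec
    have h4n : (4:ℝ)^n ≠ 0 := by positivity
    push_cast
    field_simp
    linear_combination (-4*π*(4:ℝ)^n) * hrec' + (-(Real.cos 0 * Real.cos 0 ^ (n*2) * (4:ℝ)^(n*2) * 4)) * Real.sin_zero

lemma cos_odd_int (k : ℕ) :
    ∫ x in (0:ℝ)..(2*π), Real.cos x ^ (2*k+1) = 0 := by
  induction k with
  | zero => simp [Real.sin_two_pi]
  | succ n ih =>
    have h := integral_cos_pow (a := 0) (b := 2*π) (2*n+1)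
    have h2 : 2*(n+1)+1 = (2*n+1) + 2 := by ring
    rw [h2, h, Real.sin_two_pi, ih]
    simp

lemma cb_le_four_pow (n : ℕ) : Nat.centralBinom n ≤ 4^n := by
  have h1 : Nat.centralBinom n ≤ ∑ i ∈ Finset.range (2*n+1), (2*n).choose i := by
    refine Finset.single_le_sum (f := fun i => (2*n).choose i) (fun i _ => Nat.zero_le _) ?_
    simp only [Finset.mem_range]; omega
  have h2 : ∑ i ∈ Finset.range (2*n+1), (2*n).choose i = 2^(2*n) := Nat.sum_range_choose (2*n)
  calc Nat.centralBinom n ≤ 2^(2*n) := h1.trans_eq h2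
    _ = 4^n := by rw [pow_mul]; norm_num

lemma fact_id (m : ℕ) :
    ((2*(m+1)-1).factorial : ℝ) / ((m+1).factorial : ℝ)^2
      = (Nat.centralBinom (m+1) : ℝ) / (2*(m:ℝ)+2) := by
  have key : Nat.centralBinom (m+1) * (m+1).factorial * (m+1).factorial = (2*(m+1)).factorial := by
    have := Nat.choose_mul_factorial_mul_factorial (show m+1 ≤ 2*(m+1) by omega)
    simpa [Nat.centralBinom, show 2*(m+1) - (m+1) = m+1 by omega] using this
  have h1 : 2*(m+1) - 1 = 2*m+1 := by omega
  have h2 : (2*(m+1)).factorial = (2*m+2) * (2*m+1).factorial := by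
    have : 2*(m+1) = (2*m+1) + 1 := by omega
    rw [this, Nat.factorial_succ]
  rw [h1]
  have keyR : (Nat.centralBinom (m+1) : ℝ) * ((m+1).factorial : ℝ) * ((m+1).factorial : ℝ)
      = (2*(m:ℝ)+2) * ((2*m+1).factorial : ℝ) := by
    have := key
    rw [h2] at this
    exact_mod_cast this
  have hf : ((m+1).factorial : ℝ) ≠ 0 := by positivity
  field_simp
  nlinarith [keyR]


set_option maxHeartbeats 1000000 in
/-- for every real `c > 0`,
`(1/(2πi)) ∮_{|z|=1} log(1 + |1 + √c·z|²)/z dz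
  = log(2+c) − Σ_{k=1}^∞ (√c/(2+c))^{2k} (2k−1)!/(k!)²`,
where the series converges absolutely (it has nonnegative terms, so summability
of the terms is absolute convergence).  The series over `k ≥ 1` is written as a
`tsum` over `ℕ` via the shift `k ↦ k+1`. -/
theorem stmt_12 (c : ℝ) (hc : 0 < c) :
    Summable (fun k : ℕ =>
      (Real.sqrt c / (2 + c)) ^ (2 * (k + 1)) *
        (Nat.factorial (2 * (k + 1) - 1) : ℝ) / ((Nat.factorial (k + 1) : ℝ) ^ 2)) ∧
    (1 / (2 * Real.pi * Complex.I)) *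
        (∮ z in C(0, 1),
          (Real.log (1 + ‖1 + (Real.sqrt c : ℂ) * z‖ ^ 2) : ℂ) / z)
      = ((Real.log (2 + c) -
          ∑' k : ℕ,
            (Real.sqrt c / (2 + c)) ^ (2 * (k + 1)) *
              (Nat.factorial (2 * (k + 1) - 1) : ℝ) /
                ((Nat.factorial (k + 1) : ℝ) ^ 2) : ℝ) : ℂ) := by
  have h2c : (0:ℝ) < 2 + c := by linarith
  set x : ℝ := Real.sqrt c / (2 + c) with hx
  set a : ℝ := 2 * x with haa
  have hx0 : 0 ≤ x := by positivity
  have hsq : Real.sqrt c ^ 2 = c := Real.sq_sqrt hc.le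
  have ha0 : 0 ≤ a := by positivity
  have ha1 : a < 1 := by
    rw [haa, hx, mul_div_assoc']
    rw [div_lt_one h2c]
    nlinarith [sq_nonneg (Real.sqrt c - 1), Real.sqrt_nonneg c]
  -- the series terms
  set t : ℕ → ℝ := fun k => x ^ (2 * (k + 1)) *
        (Nat.factorial (2 * (k + 1) - 1) : ℝ) / ((Nat.factorial (k + 1) : ℝ) ^ 2) with ht
  have htk : ∀ k : ℕ, t k = (x^2)^(k+1) * ((Nat.centralBinom (k+1) : ℝ) / (2*(k:ℝ)+2)) := by
    intro k
    rw [ht]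
    simp only []
    rw [mul_div_assoc, fact_id k, pow_mul]
  have hcb : ∀ k : ℕ, (Nat.centralBinom (k+1) : ℝ) / (2*(k:ℝ)+2) ≤ 4^(k+1) := by
    intro k
    have h1 : (Nat.centralBinom (k+1) : ℝ) ≤ 4^(k+1) := by
      exact_mod_cast cb_le_four_pow (k+1)
    calc (Nat.centralBinom (k+1) : ℝ) / (2*(k:ℝ)+2) ≤ (Nat.centralBinom (k+1) : ℝ) := by
          apply div_le_self (by positivity); linarith [Nat.cast_nonneg (α := ℝ) k]
      _ ≤ 4^(k+1) := h1
  have htle : ∀ k : ℕ, t k ≤ (a^2)^(k+1) := by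
    intro k
    rw [htk]
    have heq : (a^2)^(k+1) = (x^2)^(k+1) * 4^(k+1) := by
      rw [haa, ← mul_pow]; ring_nf
    rw [heq]
    exact mul_le_mul_of_nonneg_left (hcb k) (by positivity)
  have ht0 : ∀ k : ℕ, 0 ≤ t k := by
    intro k; rw [ht]; positivity
  have hgeo : Summable (fun k : ℕ => (a^2)^(k+1)) := by
    have h1 : a^2 < 1 := by nlinarith
    have := (summable_geometric_of_lt_one (by positivity) h1).mul_right (a^2)
    apply this.congr
    intro k
    rw [← pow_succ]
  have hSummable : Summable t := Summable.of_nonneg_of_le ht0 htle hgeo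
  -- geometry on the circle
  set L : ℝ → ℝ := fun θ => Real.log (1 + ‖1 + (Real.sqrt c : ℂ) * circleMap 0 1 θ‖ ^ 2) with hLdef
  have habs : ∀ θ : ℝ, ‖1 + (Real.sqrt c : ℂ) * circleMap 0 1 θ‖ ^ 2
      = 1 + c + 2 * Real.sqrt c * Real.cos θ := by
    intro θ
    rw [Complex.sq_norm, Complex.normSq_apply]
    simp only [circleMap, Complex.ofReal_one, one_mul, Complex.add_re, Complex.add_im,
      Complex.mul_re, Complex.mul_im, Complex.ofReal_re, Complex.ofReal_im, Complex.one_re,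
      Complex.one_im, Complex.zero_re, Complex.zero_im, Complex.exp_ofReal_mul_I_re,
      Complex.exp_ofReal_mul_I_im, zero_add, zero_mul, mul_zero, sub_zero, add_zero]
    linear_combination Real.sqrt c ^ 2 * Real.sin_sq_add_cos_sq θ + Real.sq_sqrt hc.le
  have hposθ : ∀ θ : ℝ, 0 < 1 + a * Real.cos θ := by
    intro θ
    have h1 := Real.neg_one_le_cos θ
    have h2 := Real.cos_le_one θ
    nlinarith
  have hLsplit : ∀ θ : ℝ, L θ = Real.log (2 + c) + Real.log (1 + a * Real.cos θ) := by
    intro θ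
    rw [hLdef]
    simp only [habs θ]
    have hprod : 1 + (1 + c + 2 * Real.sqrt c * Real.cos θ) = (2 + c) * (1 + a * Real.cos θ) := by
      rw [haa, hx]
      field_simp
      ring
    rw [hprod, Real.log_mul h2c.ne' (hposθ θ).ne']
  have h02 : (0:ℝ) ≤ 2 * π := by positivity
  -- circle integral reduces to interval integral of L
  have hcirc : (∮ z in C(0, 1),
        (Real.log (1 + ‖1 + (Real.sqrt c : ℂ) * z‖ ^ 2) : ℂ) / z)
      = Complex.I * ((∫ θ in (0:ℝ)..2*π, L θ : ℝ) : ℂ) := by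
    rw [circleIntegral]
    have hpt : ∀ θ : ℝ, deriv (circleMap 0 1) θ •
        ((Real.log (1 + ‖1 + (Real.sqrt c : ℂ) * circleMap 0 1 θ‖ ^ 2) : ℂ)
          / circleMap 0 1 θ) = Complex.I * ((L θ : ℝ) : ℂ) := by
      intro θ
      have hne : circleMap 0 1 θ ≠ 0 := circleMap_ne_center one_ne_zero
      rw [deriv_circleMap, smul_eq_mul, hLdef]
      field_simp
    rw [show (fun θ : ℝ => deriv (circleMap 0 1) θ •
        ((Real.log (1 + ‖1 + (Real.sqrt c : ℂ) * circleMap 0 1 θ‖ ^ 2) : ℂ)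
          / circleMap 0 1 θ)) = fun θ : ℝ => Complex.I * ((L θ : ℝ) : ℂ) from funext hpt]
    rw [intervalIntegral.integral_const_mul]
    congr 1
    exact intervalIntegral.integral_ofReal
  -- series expansion of the log integral
  set μ : Measure ℝ := volume.restrict (Set.Ioc (0:ℝ) (2*π)) with hμ
  haveI : IsFiniteMeasure μ := by
    constructor
    rw [hμ, Measure.restrict_apply_univ]
    exact measure_Ioc_lt_top
  set F : ℕ → ℝ → ℝ := fun n θ => (-(a * Real.cos θ))^(n+1)/((n:ℝ)+1) with hF
  have hFsum : ∀ θ : ℝ, HasSum (fun n => F n θ) (-Real.log (1 + a * Real.cos θ)) := by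
    intro θ
    have habslt : |(-(a * Real.cos θ))| < 1 := by
      rw [abs_neg, abs_mul, abs_of_nonneg ha0]
      calc a * |Real.cos θ| ≤ a * 1 := by
            exact mul_le_mul_of_nonneg_left (abs_cos_le_one θ) ha0
        _ < 1 := by linarith
    have h := hasSum_pow_div_log_of_abs_lt_one habslt
    simpa [sub_neg_eq_add] using h
  have hFcont : ∀ n, Continuous (F n) := by
    intro n
    apply Continuous.div_const
    exact (continuous_const.mul Real.continuous_cos).neg.pow _
  have hFint : ∀ n, Integrable (F n) μ := fun n => (hFcont n).integrableOn_Ioc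
  have hFbound : ∀ n θ, ‖F n θ‖ ≤ a^(n+1) := by
    intro n θ
    rw [hF]
    simp only [Real.norm_eq_abs, abs_div, abs_pow, abs_neg]
    have h1 : |(n:ℝ)+1| = (n:ℝ)+1 := abs_of_pos (by positivity)
    rw [h1]
    calc |a * Real.cos θ|^(n+1) / ((n:ℝ)+1) ≤ |a * Real.cos θ|^(n+1) := by
          apply div_le_self (by positivity)
          simp
      _ ≤ a^(n+1) := by
          apply pow_le_pow_left₀ (abs_nonneg _)
          rw [abs_mul, abs_of_nonneg ha0]
          calc a * |Real.cos θ| ≤ a * 1 :=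
                mul_le_mul_of_nonneg_left (abs_cos_le_one θ) ha0
            _ = a := mul_one a
  have hμuniv : (μ Set.univ).toReal = 2*π := by
    rw [hμ, Measure.restrict_apply_univ, Real.volume_Ioc]
    rw [ENNReal.toReal_ofReal (by linarith [Real.pi_pos])]
    ring
  have hnormint : ∀ n, ∫ θ, ‖F n θ‖ ∂μ ≤ (2*π) * a^(n+1) := by
    intro n
    have h1 : ∫ θ, ‖F n θ‖ ∂μ ≤ ∫ _, a^(n+1) ∂μ :=
      integral_mono (hFint n).norm (integrable_const _) (fun θ => hFbound n θ)
    rwa [MeasureTheory.integral_const, Measure.real, hμuniv, smul_eq_mul] at h1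
  have hsumnorm : Summable (fun n => ∫ θ, ‖F n θ‖ ∂μ) := by
    apply Summable.of_nonneg_of_le
      (fun n => integral_nonneg (fun θ => norm_nonneg _)) hnormint
    have := ((summable_geometric_of_lt_one ha0 ha1).mul_right a).mul_left (2*π)
    apply this.congr
    intro n
    rw [pow_succ]
  have hHS : HasSum (fun n => ∫ θ, F n θ ∂μ) (∫ θ, (∑' n, F n θ) ∂μ) :=
    hasSum_integral_of_summable_integral_norm hFint hsumnorm
  -- value of each term integral
  have he : ∀ n : ℕ, ∫ θ, F n θ ∂μ
      = (-a)^(n+1)/((n:ℝ)+1) * ∫ θ in (0:ℝ)..2*π, Real.cos θ^(n+1) := by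
    intro n
    rw [hμ, ← intervalIntegral.integral_of_le h02, ← intervalIntegral.integral_const_mul]
    apply intervalIntegral.integral_congr
    intro θ _
    show (-(a * Real.cos θ)) ^ (n + 1) / ((n:ℝ) + 1) = (-a) ^ (n+1) / ((n:ℝ)+1) * Real.cos θ ^ (n+1)
    rw [show (-(a * Real.cos θ)) = (-a) * Real.cos θ by ring, mul_pow]
    ring
  have heven : ∀ k : ℕ, ∫ θ, F (2*k) θ ∂μ = 0 := by
    intro k
    rw [he (2*k), cos_odd_int k, mul_zero]
  have hodd : ∀ k : ℕ, ∫ θ, F (2*k+1) θ ∂μ = (2*π) * t k := by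
    intro k
    rw [he (2*k+1)]
    have h1 : 2*k+1+1 = 2*(k+1) := by ring
    rw [h1, cos_even_int (k+1)]
    rw [htk k]
    have hnegpow : (-a)^(2*(k+1)) = a^(2*(k+1)) := by
      apply Even.neg_pow
      exact ⟨k+1, by ring⟩
    rw [hnegpow, haa, mul_pow, pow_mul, pow_mul]
    have h4 : ((2:ℝ)^2)^(k+1) = 4^(k+1) := by norm_num
    have h4n : ((4:ℝ))^(k+1) ≠ 0 := by positivity
    push_cast
    field_simp
    ring
  have hT : HasSum t (∑' k, t k) := hSummable.hasSum
  have heH : HasSum (fun k => ∫ θ, F (2*k) θ ∂μ) 0 := by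
    rw [funext heven]; exact hasSum_zero
  have hoH : HasSum (fun k => ∫ θ, F (2*k+1) θ ∂μ) ((2*π) * ∑' k, t k) := by
    rw [funext hodd]; exact hT.mul_left (2*π)
  have htot : HasSum (fun n => ∫ θ, F n θ ∂μ) (0 + (2*π) * ∑' k, t k) :=
    heH.even_add_odd hoH
  have hEq1 : (∫ θ, (∑' n, F n θ) ∂μ) = 0 + (2*π) * ∑' k, t k := hHS.unique htot
  have hEq2 : (∫ θ, (∑' n, F n θ) ∂μ)
      = -∫ θ in (0:ℝ)..2*π, Real.log (1 + a * Real.cos θ) := by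
    have hpt : ∀ θ : ℝ, (∑' n, F n θ) = -Real.log (1 + a * Real.cos θ) :=
      fun θ => (hFsum θ).tsum_eq
    rw [funext hpt] at *
    rw [hμ, ← intervalIntegral.integral_of_le h02, ← intervalIntegral.integral_neg]
  have hKey : (∫ θ in (0:ℝ)..2*π, Real.log (1 + a * Real.cos θ))
      = -((2*π) * ∑' k, t k) := by
    have h := hEq1.symm.trans hEq2
    linarith [h]

  -- final assembly
  refine ⟨hSummable, ?_⟩
  have hLint : (∫ θ in (0:ℝ)..2*π, L θ)
      = 2*π*Real.log (2+c) - 2*π*(∑' k, t k) := by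
    have hcong : (∫ θ in (0:ℝ)..2*π, L θ)
        = ∫ θ in (0:ℝ)..2*π, (Real.log (2+c) + Real.log (1+a*Real.cos θ)) :=
      intervalIntegral.integral_congr (fun θ _ => hLsplit θ)
    rw [hcong]
    have hint1 : IntervalIntegrable (fun _ : ℝ => Real.log (2+c)) volume 0 (2*π) :=
      intervalIntegrable_const
    have hcont2 : Continuous fun θ : ℝ => Real.log (1+a*Real.cos θ) :=
      (continuous_const.add (continuous_const.mul Real.continuous_cos)).log
        (fun θ => (hposθ θ).ne')
    rw [intervalIntegral.integral_add hint1 (hcont2.intervalIntegrable _ _)]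
    rw [intervalIntegral.integral_const, hKey]
    simp only [smul_eq_mul, sub_zero]
    ring
  have hts : (∑' k : ℕ,
        (Real.sqrt c / (2 + c)) ^ (2 * (k + 1)) *
          (Nat.factorial (2 * (k + 1) - 1) : ℝ) /
            ((Nat.factorial (k + 1) : ℝ) ^ 2)) = ∑' k, t k := by
    refine tsum_congr fun k => ?_
    simp only [ht, hx]
  rw [hcirc, hLint, hts]
  have hπ : (π:ℂ) ≠ 0 := Complex.ofReal_ne_zero.mpr Real.pi_ne_zero
  have hI := Complex.I_ne_zero
  have hred : ((2*π*Real.log (2+c) - 2*π*(∑' k, t k) : ℝ) : ℂ)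
      = 2*(π:ℂ)*(((Real.log (2+c) - ∑' k, t k : ℝ)) : ℂ) := by
    push_cast; ring
  rw [hred]
  have hgen : ∀ w : ℂ, (1 / (2 * (π:ℂ) * Complex.I)) * (Complex.I * (2*(π:ℂ)*w)) = w := by
    intro w
    field_simp
  exact hgen _
end

section
/- For every real c > 0, one has (1/(2πi)) ∮_{|z|=1} log(1 + |1 + √c·z|²) / z³ dz = −Σ_{k=1}^∞ ( √c/(2+c) )^{2k} · (2k−1)! / ((k−1)!(k+1)!), where the series on the right converges absolutely. -/
open Real

open Real Finset


set_option maxHeartbeats 1600000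

private lemma catalan_le_four_pow' (n : ℕ) : (catalan n : ℝ) ≤ 4 ^ n := by
  have h1 : catalan n ≤ n.centralBinom := by
    calc catalan n ≤ (n+1) * catalan n := Nat.le_mul_of_pos_left _ (by omega)
    _ = n.centralBinom := succ_mul_catalan_eq_centralBinom n
  have h2 : n.centralBinom ≤ 4 ^ n := by
    have : (2*n).choose n ≤ ∑ m ∈ range (2*n+1), (2*n).choose m :=
      Finset.single_le_sum (fun i _ => Nat.zero_le _) (by simp; omega)
    rw [Nat.sum_range_choose] at this
    calc n.centralBinom = (2*n).choose n := Nat.centralBinom_eq_two_mul_choose n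
    _ ≤ 2 ^ (2*n) := this
    _ = 4 ^ n := by rw [pow_mul]; norm_num
  exact_mod_cast h1.trans h2

private lemma cat_fact' (k : ℕ) :
    (catalan (k+1) : ℝ) * (Nat.factorial k * Nat.factorial (k+2)) =
      2 * Nat.factorial (2*k+1) := by
  have A : ((k+2 : ℕ) : ℝ) * (catalan (k+1) : ℝ) = ((2*(k+1)).choose (k+1) : ℝ) := by
    exact_mod_cast congrArg (Nat.cast (R := ℝ)) (succ_mul_catalan_eq_centralBinom (k+1))
  push_cast at A
  have B0 := Nat.choose_mul_factorial_mul_factorial (show k+1 ≤ 2*(k+1) by omega)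
  have hsub : 2*(k+1) - (k+1) = k+1 := by omega
  rw [hsub] at B0
  have B : ((2*(k+1)).choose (k+1) : ℝ) * (Nat.factorial (k+1)) * (Nat.factorial (k+1))
      = (Nat.factorial (2*(k+1)) : ℝ) := by exact_mod_cast congrArg (Nat.cast (R := ℝ)) B0
  have e1 : (Nat.factorial (k+1) : ℝ) = (k+1) * Nat.factorial k := by
    exact_mod_cast Nat.factorial_succ k
  have e2 : (Nat.factorial (k+2) : ℝ) = (k+2) * ((k+1) * Nat.factorial k) := by
    rw [Nat.factorial_succ, Nat.factorial_succ]; push_cast; ring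
  have e3 : (Nat.factorial (2*(k+1)) : ℝ) = (2*k+2) * Nat.factorial (2*k+1) := by
    have : 2*(k+1) = (2*k+1) + 1 := by omega
    rw [this, Nat.factorial_succ]; push_cast; ring
  have hk1 : ((k:ℝ)+1) ≠ 0 := by positivity
  rw [e3] at B
  rw [e1] at B
  rw [e2]
  have key : ((k:ℝ)+1) * ((catalan (k+1) : ℝ) * (Nat.factorial k * (((k:ℝ)+2)*(((k:ℝ)+1)*Nat.factorial k)))) = ((k:ℝ)+1) * (2 * Nat.factorial (2*k+1)) := by
    linear_combination ((Nat.factorial k : ℝ))^2*((k:ℝ)+1)^2 * A + B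
  exact mul_left_cancel₀ hk1 key

private lemma catalanS' {x : ℝ} (hx0 : 0 < x) (hx : x ≤ 1/8) :
    Summable (fun k : ℕ => (catalan (k+1) : ℝ) * x^(k+1)) ∧
    (∑' k : ℕ, (catalan (k+1) : ℝ) * x^(k+1)) ≤ 1 ∧
    x * (1 + ∑' k : ℕ, (catalan (k+1) : ℝ) * x^(k+1))^2
      = ∑' k : ℕ, (catalan (k+1) : ℝ) * x^(k+1) := by
  have h4x : 4*x < 1 := by linarith
  have h4x0 : 0 ≤ 4*x := by linarith
  have hgeo : Summable (fun k : ℕ => (4*x)^k) := summable_geometric_of_lt_one h4x0 h4x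
  have hbound : ∀ k, (catalan k : ℝ) * x^k ≤ (4*x)^k := by
    intro k
    rw [mul_pow]
    exact mul_le_mul_of_nonneg_right (catalan_le_four_pow' k) (by positivity)
  have hnn : ∀ k, 0 ≤ (catalan k : ℝ)*x^k := fun k => by positivity
  have hF : Summable (fun k : ℕ => (catalan k : ℝ) * x^k) :=
    Summable.of_nonneg_of_le hnn hbound hgeo
  have hS : Summable (fun k : ℕ => (catalan (k+1) : ℝ) * x^(k+1)) :=
    (summable_nat_add_iff 1).mpr hF
  set S := ∑' k : ℕ, (catalan (k+1) : ℝ) * x^(k+1) with hSdef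
  have hnorm : Summable (fun k : ℕ => ‖(catalan k : ℝ) * x^k‖) := by
    simpa only [Real.norm_eq_abs] using hF.abs
  have hprod := tsum_mul_tsum_eq_tsum_sum_range_of_summable_norm hnorm hnorm
  have hinner : ∀ n : ℕ, (∑ k ∈ range (n+1),
      ((catalan k : ℝ) * x^k) * ((catalan (n-k) : ℝ) * x^(n-k))) = (catalan (n+1) : ℝ) * x^n := by
    intro n
    have h1 : ∀ k ∈ range (n+1),
        ((catalan k : ℝ) * x^k) * ((catalan (n-k) : ℝ) * x^(n-k))
          = ((catalan k : ℝ) * (catalan (n-k) : ℝ)) * x^n := by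
      intro k hk
      have hk' : k ≤ n := by simpa [Nat.lt_succ] using hk
      have : x^k * x^(n-k) = x^n := by rw [← pow_add, Nat.add_sub_cancel' hk']
      rw [← this]; ring
    rw [Finset.sum_congr rfl h1, ← Finset.sum_mul]
    congr 1
    have h2 : catalan (n+1) = ∑ i ∈ range (n+1), catalan i * catalan (n-i) := by
      rw [catalan_succ' n, ← Finset.Nat.sum_antidiagonal_eq_sum_range_succ
        (fun i j => catalan i * catalan j)]
    rw [h2]
    push_cast
    rfl
  have hFF : (∑' k : ℕ, (catalan k : ℝ) * x^k) * (∑' k : ℕ, (catalan k : ℝ) * x^k)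
      = ∑' n : ℕ, (catalan (n+1) : ℝ) * x^n := by
    rw [hprod]; exact tsum_congr hinner
  have hxFF : x * ((∑' k : ℕ, (catalan k : ℝ) * x^k) * (∑' k : ℕ, (catalan k : ℝ) * x^k)) = S := by
    rw [hFF, ← tsum_mul_left]
    exact tsum_congr fun n => by ring
  have hF1S : (∑' k : ℕ, (catalan k : ℝ) * x^k) = 1 + S := by
    rw [Summable.tsum_eq_zero_add hF]
    simp [catalan_zero]
    exact hSdef.symm
  refine ⟨hS, ?_, ?_⟩
  · have hgeo' : Summable (fun k : ℕ => (4*x)^(k+1)) := (summable_nat_add_iff 1).mpr hgeo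
    have hle : S ≤ ∑' k : ℕ, (4*x)^(k+1) := Summable.tsum_le_tsum (fun k => hbound (k+1)) hS hgeo'
    have hval : (∑' k : ℕ, (4*x)^(k+1)) = (4*x) * (1 - 4*x)⁻¹ := by
      have : ∀ k : ℕ, (4*x)^(k+1) = (4*x) * (4*x)^k := fun k => by ring
      rw [tsum_congr this, tsum_mul_left, tsum_geometric_of_lt_one h4x0 h4x]
    have h1 : 0 < 1 - 4*x := by linarith
    have : (4*x) * (1-4*x)⁻¹ ≤ 1 := by
      rw [← div_eq_mul_inv, div_le_one h1]; linarith
    linarith [hle, hval ▸ hle]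
  · rw [show (1 + S)^2 = (1+S) * (1+S) by ring, ← hF1S, hxFF]
private lemma circleIntegral_add' {f g : ℂ → ℂ} {c : ℂ} {R : ℝ} (hf : CircleIntegrable f c R)
    (hg : CircleIntegrable g c R) :
    (∮ z in C(c, R), (f z + g z)) = (∮ z in C(c, R), f z) + ∮ z in C(c, R), g z := by
  simp only [circleIntegral, smul_add, intervalIntegral.integral_add hf.out hg.out]

/-- for every real `c > 0`,
`(1/(2πi)) ∮_{|z|=1} log(1 + |1 + √c·z|²)/z³ dz
  = −Σ_{k=1}^∞ (√c/(2+c))^{2k} (2k−1)!/((k−1)!(k+1)!)`,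
where the series converges absolutely (nonnegative terms).  The series over
`k ≥ 1` is written as a `tsum` over `ℕ` via the shift `k ↦ k+1`. -/
theorem stmt_13 (c : ℝ) (hc : 0 < c) :
    Summable (fun k : ℕ =>
      (Real.sqrt c / (2 + c)) ^ (2 * (k + 1)) *
        (Nat.factorial (2 * (k + 1) - 1) : ℝ) /
          ((Nat.factorial k : ℝ) * (Nat.factorial (k + 2) : ℝ))) ∧
    (1 / (2 * Real.pi * Complex.I)) *
        (∮ z in C(0, 1),
          (Real.log (1 + ‖1 + (Real.sqrt c : ℂ) * z‖ ^ 2) : ℂ) / z ^ 3)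
      = ((-∑' k : ℕ,
            (Real.sqrt c / (2 + c)) ^ (2 * (k + 1)) *
              (Nat.factorial (2 * (k + 1) - 1) : ℝ) /
                ((Nat.factorial k : ℝ) * (Nat.factorial (k + 2) : ℝ)) : ℝ) : ℂ) := by
  -- real constants
  set t := Real.sqrt c with htdef
  have ht : 0 < t := Real.sqrt_pos.mpr hc
  have ht2 : t^2 = c := Real.sq_sqrt hc.le
  set s := Real.sqrt (4 + c^2) with hsdef
  have hs : 0 < s := Real.sqrt_pos.mpr (by positivity)
  have hs2 : s^2 = 4 + c^2 := Real.sq_sqrt (by positivity)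
  have h2c : (0:ℝ) < 2 + c := by linarith
  have hslt : s < 2 + c := by nlinarith [hs2, hs, h2c]
  set r := ((2 + c) - s) / (2*t) with hrdef
  have hr0 : 0 < r := div_pos (by linarith) (by linarith)
  have hkey : t * (1 + r^2) = (2+c) * r := by
    rw [hrdef]
    field_simp
    nlinarith [hs2, ht2]
  have hr1 : r < 1 := by
    rw [hrdef, div_lt_one (by linarith)]
    have h2 : 2 + c - 2*t < s := by
      nlinarith [hs2, ht2, hs, sq_nonneg (t-1), ht]
    linarith
  -- series part
  set x := (t/(2+c))^2 with hxdef
  have hx0 : 0 < x := by positivity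
  have hx8 : x ≤ 1/8 := by
    have hxc : x = c/(2+c)^2 := by rw [hxdef, div_pow, ht2]
    rw [hxc, div_le_iff₀ (by positivity)]
    nlinarith [sq_nonneg (c-2)]
  obtain ⟨hSsum, hSle, hSeq⟩ := catalanS' hx0 hx8
  set S := ∑' k : ℕ, (catalan (k+1) : ℝ) * x^(k+1) with hSdef
  have hS0 : 0 ≤ S := tsum_nonneg fun k => by positivity
  have hxr : x * (1 + r^2)^2 = r^2 := by
    rw [hxdef]
    field_simp
    linear_combination (t*(1+r^2) + (2+c)*r) * hkey
  have hSr : S = r^2 := by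
    have hfac : (S - r^2) * (x*(2 + S + r^2) - 1) = 0 := by
      linear_combination hSeq - hxr + (S - r^2) * (x*(2+S+r^2) - 1) - (x*(1+S)^2 - S) + (x*(1+r^2)^2 - r^2)
    have hneg : x*(2 + S + r^2) - 1 < 0 := by nlinarith
    rcases mul_eq_zero.mp hfac with h | h
    · linarith [sub_eq_zero.mp h]
    · linarith
  have hterm : ∀ k : ℕ, (t / (2 + c)) ^ (2 * (k + 1)) *
      (Nat.factorial (2 * (k + 1) - 1) : ℝ) /
        ((Nat.factorial k : ℝ) * (Nat.factorial (k + 2) : ℝ))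
      = ((catalan (k+1) : ℝ) * x^(k+1)) / 2 := by
    intro k
    have h21 : 2*(k+1) - 1 = 2*k+1 := by omega
    rw [h21]
    have hcf := cat_fact' k
    have hf0 : ((Nat.factorial k : ℝ) * (Nat.factorial (k+2) : ℝ)) ≠ 0 := by positivity
    rw [pow_mul, ← hxdef, div_eq_div_iff hf0 (two_ne_zero)]
    linear_combination (-(x^(k+1))) * hcf
  have hsummable : Summable (fun k : ℕ =>
      (t / (2 + c)) ^ (2 * (k + 1)) * (Nat.factorial (2 * (k + 1) - 1) : ℝ) /
        ((Nat.factorial k : ℝ) * (Nat.factorial (k + 2) : ℝ))) :=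
    (hSsum.div_const 2).congr fun k => (hterm k).symm
  have hT : (∑' k : ℕ, (t / (2 + c)) ^ (2 * (k + 1)) *
      (Nat.factorial (2 * (k + 1) - 1) : ℝ) /
        ((Nat.factorial k : ℝ) * (Nat.factorial (k + 2) : ℝ))) = r^2/2 := by
    rw [tsum_congr hterm, tsum_div_const, ← hSdef, hSr]
  refine ⟨hsummable, ?_⟩
  rw [hT]
  -- complex-analytic part
  set g : ℂ → ℂ := fun z => Complex.log (1 + (r:ℂ) * z) with hgdef
  have hslit : ∀ z : ℂ, ‖z‖ ≤ 1 → (1 + (r:ℂ) * z) ∈ Complex.slitPlane := by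
    intro z hz
    rw [Complex.mem_slitPlane_iff]
    left
    have hre : |z.re| ≤ 1 := (Complex.abs_re_le_norm z).trans hz
    have h : (1 + (r:ℂ)*z).re = 1 + r * z.re := by simp
    rw [h]
    nlinarith [abs_le.mp hre]
  have hgdiff : ∀ z ∈ Metric.closedBall (0:ℂ) 1, DifferentiableAt ℂ g z := by
    intro z hz
    rw [Metric.mem_closedBall, dist_zero_right] at hz
    exact ((differentiableAt_const _).add ((differentiableAt_id).const_mul _)).clog
      (hslit z hz)
  have hgdiffOn : DifferentiableOn ℂ g (Metric.closedBall (0:ℂ) 1) :=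
    fun z hz => (hgdiff z hz).differentiableWithinAt
  have hgcont : ContinuousOn g (Metric.closedBall (0:ℂ) 1) := hgdiffOn.continuousOn
  set cf : ℕ → ℂ := fun n => (-1)^(n+1) * (r:ℂ)^n / n with hcfdef
  set p : FormalMultilinearSeries ℂ ℂ ℂ := FormalMultilinearSeries.ofScalars ℂ cf with hpdef
  have hpnorm : ∀ n, ‖p n‖ ≤ 1 := by
    intro n
    rw [hpdef, FormalMultilinearSeries.ofScalars_norm]
    rcases Nat.eq_zero_or_pos n with rfl | hn
    · simp [hcfdef]
    · rw [hcfdef]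
      simp only [norm_div, norm_mul, norm_pow, norm_neg, norm_one, one_pow, one_mul,
        Complex.norm_natCast, Complex.norm_real, Real.norm_eq_abs, abs_of_pos hr0]
      calc r^n / n ≤ 1/1 := by
            apply div_le_div₀ (by norm_num) (pow_le_one₀ hr0.le hr1.le) one_pos
            exact_mod_cast hn
      _ = 1 := by norm_num
  have hrad : 1 ≤ p.radius := by
    have := p.le_radius_of_bound 1 (r := 1) (fun n => by simpa using hpnorm n)
    simpa using this
  have hps : HasFPowerSeriesOnBall g p 0 1 := by
    constructor
    · simpa using hrad
    · norm_num
    · intro y hy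
      rw [EMetric.mem_ball, edist_zero_right] at hy
      have hy1 : ‖y‖ < 1 := by
          have h' : ‖y‖₊ < 1 := by simpa [enorm_eq_nnnorm] using hy
          exact_mod_cast h'
      have hry : ‖(r:ℂ) * y‖ < 1 := by
        rw [norm_mul, Complex.norm_real, Real.norm_eq_abs, abs_of_pos hr0]
        nlinarith [norm_nonneg y]
      have H := Complex.hasSum_taylorSeries_log hry
      have heq : (fun n : ℕ => p n fun _ => y) =
          (fun n : ℕ => (-1)^(n+1) * ((r:ℂ)*y)^n / n) := by
        funext n
        rw [hpdef, FormalMultilinearSeries.ofScalars_apply_eq, hcfdef]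
        simp only [smul_eq_mul]
        ring
      rw [heq]
      simpa using H
  have hcps : p = cauchyPowerSeries g 0 1 :=
    hps.hasFPowerSeriesAt.eq_formalMultilinearSeries
      ((hgdiffOn.hasFPowerSeriesOnBall (R := 1) one_pos).hasFPowerSeriesAt)
  have h2 : (p 2 fun _ => (1:ℂ)) = -(r:ℂ)^2/2 := by
    rw [hpdef, FormalMultilinearSeries.ofScalars_apply_eq, hcfdef]
    simp only [smul_eq_mul]
    norm_num
  have h3 := cauchyPowerSeries_apply g 0 1 2 1
  have hfun : (fun z : ℂ => ((1:ℂ)/(z-0))^2 • ((z-0)⁻¹ • g z)) = fun z => g z / z^3 := by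
    funext z
    rcases eq_or_ne z 0 with rfl | hz
    · simp
    · simp only [smul_eq_mul, sub_zero, one_div, inv_pow]
      rw [eq_div_iff (pow_ne_zero 3 hz)]
      field_simp
  have hI : (2*(π:ℂ)*Complex.I : ℂ) ≠ 0 := by
    simp [Real.pi_ne_zero, Complex.I_ne_zero]
  have hint1 : (∮ z in C(0,1), g z / z^3) = (2*(π:ℂ)*Complex.I) * (-(r:ℂ)^2/2) := by
    rw [← hcps, h2, hfun] at h3
    rw [h3]
    simp only [smul_eq_mul]
    field_simp
  have hint2 : (∮ z in C(0,1), g z * z) = 0 := by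
    apply Complex.circleIntegral_eq_zero_of_differentiable_on_off_countable zero_le_one
      (Set.countable_empty)
    · exact hgcont.mul continuousOn_id
    · intro z hz
      exact (hgdiff z (Metric.ball_subset_closedBall hz.1)).mul differentiableAt_id
  have hconj_int : ∀ (f : ℝ → ℂ) (a b : ℝ),
      (∫ u in a..b, (starRingEnd ℂ) (f u)) = (starRingEnd ℂ) (∫ u in a..b, f u) := by
    intro f a b
    simp [intervalIntegral, integral_conj]
  have hint3 : (∮ z in C(0,1), (starRingEnd ℂ) (g z) / z^3) = 0 := by
    have hpt : ∀ θ : ℝ, (deriv (circleMap 0 1) θ) • ((starRingEnd ℂ) (g (circleMap 0 1 θ)) / (circleMap 0 1 θ)^3)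
        = (starRingEnd ℂ) (-((deriv (circleMap 0 1) θ) • (g (circleMap 0 1 θ) * circleMap 0 1 θ))) := by
      intro θ
      set u := circleMap 0 1 θ with hudef
      have hu0 : u ≠ 0 := circleMap_ne_center one_ne_zero
      have hu : (starRingEnd ℂ) u = u⁻¹ := by
        have habs : ‖u‖ = 1 := by
          rw [hudef, norm_circleMap_zero]; norm_num
        rw [Complex.inv_def, Complex.normSq_eq_norm_sq, habs]
        simp
      rw [deriv_circleMap]
      rw [← hudef]
      simp only [smul_eq_mul, map_mul, map_neg, Complex.conj_I, hu]
      field_simp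
    calc (∮ z in C(0,1), (starRingEnd ℂ) (g z) / z^3)
        = ∫ θ in (0:ℝ)..(2*π), (starRingEnd ℂ) (-((deriv (circleMap 0 1) θ) • (g (circleMap 0 1 θ) * circleMap 0 1 θ))) := by
          rw [circleIntegral]
          exact intervalIntegral.integral_congr fun θ _ => hpt θ
      _ = (starRingEnd ℂ) (∫ θ in (0:ℝ)..(2*π), -((deriv (circleMap 0 1) θ) • (g (circleMap 0 1 θ) * circleMap 0 1 θ))) := hconj_int _ _ _
      _ = (starRingEnd ℂ) (-(∮ z in C(0,1), g z * z)) := by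
          rw [intervalIntegral.integral_neg]
          rfl
      _ = 0 := by rw [hint2]; simp
  -- constant term integral
  set K := Real.log ((2+c)/(1+r^2)) with hKdef
  have hint0 : (∮ z in C(0,1), (K:ℂ)/z^3) = 0 := by
    have hzpow := circleIntegral.integral_sub_zpow_of_ne (n := -3) (by decide) 0 0 1
    have heq : (fun z : ℂ => (K:ℂ)/z^3) = fun z : ℂ => (K:ℂ) • (z - 0)^(-3:ℤ) := by
      funext z
      simp [smul_eq_mul, zpow_neg, div_eq_mul_inv]
    rw [heq, circleIntegral.integral_smul, hzpow, smul_zero]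
  -- pointwise identity on the sphere
  have hsphere : ∀ z ∈ Metric.sphere (0:ℂ) 1,
      ((Real.log (1 + ‖1 + (t:ℂ) * z‖ ^ 2) : ℝ) : ℂ)
        = (K:ℂ) + g z + (starRingEnd ℂ) (g z) := by
    intro z hz
    have hz1 : ‖z‖ = 1 := by
      simpa using mem_sphere_zero_iff_norm.mp hz
    have hz2 : z.re^2 + z.im^2 = 1 := by
      have h := Complex.sq_norm z
      rw [hz1, Complex.normSq_apply] at h
      nlinarith [h]
    have hzre : |z.re| ≤ 1 := by rw [← hz1]; exact Complex.abs_re_le_norm z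
    have hwre : 0 < (1 + (r:ℂ)*z).re := by
      have h : (1 + (r:ℂ)*z).re = 1 + r * z.re := by simp
      rw [h]
      nlinarith [abs_le.mp hzre]
    have hw0 : (1 + (r:ℂ)*z) ≠ 0 := fun h => by rw [h] at hwre; simp at hwre
    have habsw : 0 < ‖1 + (r:ℂ)*z‖ := norm_pos_iff.mpr hw0
    have h1r : (0:ℝ) < 1 + r^2 := by positivity
    have hnum : 1 + ‖1 + (t:ℂ)*z‖^2
        = (2+c)/(1+r^2) * (‖1 + (r:ℂ)*z‖)^2 := by
      rw [Complex.sq_norm, Complex.sq_norm, Complex.normSq_apply, Complex.normSq_apply]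
      simp only [Complex.add_re, Complex.add_im, Complex.mul_re, Complex.mul_im,
        Complex.one_re, Complex.one_im, Complex.ofReal_re, Complex.ofReal_im]
      rw [div_mul_eq_mul_div, eq_div_iff h1r.ne']
      linear_combination (1+r^2)*ht2 + (2*z.re)*hkey + ((1+r^2)*t^2 - (2+c)*r^2)*hz2
    have hKmul : Real.log (1 + ‖1 + (t:ℂ)*z‖^2)
        = K + 2*Real.log (‖1+(r:ℂ)*z‖) := by
      rw [hnum, Real.log_mul (by positivity) (pow_ne_zero 2 habsw.ne'), hKdef, Real.log_pow]
      push_cast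
      ring
    rw [hKmul]
    push_cast
    have hlog2' : g z + (starRingEnd ℂ) (g z)
        = 2 * ((Complex.log (1 + (r:ℂ)*z)).re : ℂ) := by
      rw [hgdef]
      simp only []
      rw [Complex.add_conj]
      push_cast
      ring
    rw [← Complex.log_re]
    linear_combination -hlog2'
  -- circle integrability and splitting
  have hzsph : ∀ z ∈ Metric.sphere (0:ℂ) 1, z ≠ 0 := by
    intro z hz h0
    rw [h0] at hz
    simp at hz
  have hgcontS : ContinuousOn g (Metric.sphere (0:ℂ) 1) :=
    hgcont.mono Metric.sphere_subset_closedBall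
  have hc3 : ContinuousOn (fun z : ℂ => z^3) (Metric.sphere (0:ℂ) 1) :=
    (continuous_pow 3).continuousOn
  have hci1 : CircleIntegrable (fun z => (K:ℂ)/z^3) 0 1 :=
    ContinuousOn.circleIntegrable zero_le_one
      (continuousOn_const.div hc3 (fun z hz => pow_ne_zero 3 (hzsph z hz)))
  have hci2 : CircleIntegrable (fun z => g z/z^3) 0 1 :=
    ContinuousOn.circleIntegrable zero_le_one
      (hgcontS.div hc3 (fun z hz => pow_ne_zero 3 (hzsph z hz)))
  have hci3 : CircleIntegrable (fun z => (starRingEnd ℂ) (g z)/z^3) 0 1 :=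
    ContinuousOn.circleIntegrable zero_le_one
      ((continuous_star.comp_continuousOn hgcontS).div hc3 (fun z hz => pow_ne_zero 3 (hzsph z hz)))
  have hsplit : (∮ z in C(0,1), (Real.log (1 + ‖1 + (t:ℂ) * z‖ ^ 2) : ℂ) / z ^ 3)
      = (∮ z in C(0,1), (K:ℂ)/z^3) + (∮ z in C(0,1), g z/z^3)
          + (∮ z in C(0,1), (starRingEnd ℂ) (g z)/z^3) := by
    have e1 : (∮ z in C(0,1), (Real.log (1 + ‖1 + (t:ℂ) * z‖ ^ 2) : ℂ) / z ^ 3)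
        = ∮ z in C(0,1), ((K:ℂ)/z^3 + (g z/z^3 + (starRingEnd ℂ) (g z)/z^3)) := by
      apply circleIntegral.integral_congr zero_le_one
      intro z hz
      show (Real.log (1 + ‖1 + (t:ℂ) * z‖ ^ 2) : ℂ) / z ^ 3 = _
      rw [hsphere z hz]
      ring
    have hci23 : CircleIntegrable (fun z => g z/z^3 + (starRingEnd ℂ) (g z)/z^3) 0 1 :=
      hci2.add hci3
    rw [e1, circleIntegral_add' hci1 hci23, circleIntegral_add' hci2 hci3, add_assoc]
  rw [hsplit, hint0, hint1, hint3]
  push_cast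
  field_simp
  ring
end

section
/- For every real c > 0, one has (1/(2πi)) ∮_{|z|=1} ( |1 + √c·z|² / (1 + |1 + √c·z|²) ) / z³ dz = −(1/(2+c)) · Σ_{k=1}^∞ ( √c/(2+c) )^{2k} · (2k)! / ((k−1)!(k+1)!), where the series on the right converges absolutely. -/
open Real MeasureTheory

section Aux

open Complex intervalIntegral

lemma K_lemma (m : ℤ) :
    (∫ θ in (0:ℝ)..(2*π), Complex.exp (m * θ * I)) = if m = 0 then ((2*π:ℝ):ℂ) else 0 := by
  rcases eq_or_ne m 0 with hm | hm
  · simp [hm]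
  · rw [if_neg hm]
    have h : ∀ θ : ℝ, (m:ℂ) * θ * I = ((m:ℂ)*I) * θ := fun θ => by ring
    simp_rw [h]
    rw [integral_exp_mul_complex (mul_ne_zero (Int.cast_ne_zero.2 hm) I_ne_zero)]
    have h1 : (m:ℂ)*I*((2*π:ℝ):ℂ) = m*(2*π*I) := by push_cast; ring
    rw [h1, Complex.exp_int_mul_two_pi_mul_I]
    simp

lemma J_lemma (n : ℕ) :
    (∫ θ in (0:ℝ)..(2*π), Complex.exp (-2*θ*I) * ((Real.cos θ : ℂ))^n)
      = ∑ j ∈ Finset.range (n+1),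
          ((n.choose j : ℂ)/2^n) * (if (2*(j:ℤ) - n - 2) = 0 then ((2*π:ℝ):ℂ) else 0) := by
  have key : ∀ θ : ℝ, Complex.exp (-2*θ*I) * ((Real.cos θ : ℂ))^n
      = ∑ j ∈ Finset.range (n+1),
          ((n.choose j : ℂ)/2^n) * Complex.exp (((2*(j:ℤ) - n - 2 : ℤ):ℂ) * θ * I) := by
    intro θ
    rw [Complex.ofReal_cos, Complex.cos, div_pow, add_pow, Finset.sum_div, Finset.mul_sum]
    refine Finset.sum_congr rfl fun j hj => ?_
    have hj' : j ≤ n := Finset.mem_range_succ_iff.mp hj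
    calc Complex.exp (-2*θ*I) * (Complex.exp (θ*I)^j * Complex.exp (-θ*I)^(n-j) * (n.choose j) / 2^n)
        = ((n.choose j : ℂ)/2^n) * (Complex.exp (-2*θ*I) * Complex.exp ((j:ℂ)*(θ*I)) * Complex.exp (((n-j : ℕ):ℂ)*(-θ*I))) := by
          rw [← Complex.exp_nat_mul, ← Complex.exp_nat_mul]; ring
      _ = ((n.choose j : ℂ)/2^n) * Complex.exp (((2*(j:ℤ) - n - 2 : ℤ):ℂ) * θ * I) := by
          rw [← Complex.exp_add, ← Complex.exp_add]
          congr 1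
          push_cast [Nat.cast_sub hj']
          ring
  simp_rw [key]
  rw [intervalIntegral.integral_finset_sum]
  · refine Finset.sum_congr rfl fun j hj => ?_
    rw [intervalIntegral.integral_const_mul, K_lemma]
  · intro j hj
    apply Continuous.intervalIntegrable
    fun_prop

lemma J_even (k : ℕ) :
    (∫ θ in (0:ℝ)..(2*π), Complex.exp (-2*θ*I) * ((Real.cos θ : ℂ))^(2*k+2))
      = (((2*k+2).choose (k+2) : ℂ)/2^(2*k+2)) * ((2*π:ℝ):ℂ) := by
  rw [J_lemma]
  rw [Finset.sum_eq_single (k+2)]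
  · rw [if_pos (by push_cast; ring)]
  · intro j hj hne
    rw [if_neg, mul_zero]
    have : j ≠ k + 2 := hne
    intro h
    exact this (by omega)
  · intro h
    exact absurd (Finset.mem_range.mpr (by omega)) h

lemma J_zero (n : ℕ) (hn : ∀ k, n ≠ 2*k+2) :
    (∫ θ in (0:ℝ)..(2*π), Complex.exp (-2*θ*I) * ((Real.cos θ : ℂ))^n) = 0 := by
  rw [J_lemma]
  refine Finset.sum_eq_zero fun j hj => ?_
  rw [if_neg, mul_zero]
  intro h
  have hj' : j ≤ n := Finset.mem_range_succ_iff.mp hj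
  have h2 : 2*j = n + 2 := by omega
  exact hn (j-2) (by omega)

lemma fac_choose (k : ℕ) :
    ((2*(k+1)).factorial : ℝ) / ((k.factorial : ℝ) * ((k+2).factorial : ℝ))
      = ((2*k+2).choose (k+2) : ℝ) := by
  have h := Nat.choose_mul_factorial_mul_factorial (show (k+2) ≤ 2*k+2 by omega)
  have h2 : (2*(k+1)).factorial = (2*k+2).choose (k+2) * (k+2).factorial * k.factorial := by
    rw [show 2*(k+1) = 2*k+2 by ring]
    rw [← h, show 2*k+2-(k+2) = k by omega]
  rw [h2]
  push_cast
  have h3 : (k.factorial : ℝ) ≠ 0 := Nat.cast_ne_zero.2 k.factorial_ne_zero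
  have h4 : ((k+2).factorial : ℝ) ≠ 0 := Nat.cast_ne_zero.2 (k+2).factorial_ne_zero
  field_simp

lemma abs_sq_aux (s θ : ℝ) :
    ‖1 + (s:ℂ) * Complex.exp (θ*I)‖^2 = 1 + s^2 + 2*s*Real.cos θ := by
  rw [Complex.sq_norm, Complex.normSq_apply]
  simp [Complex.exp_ofReal_mul_I_re, Complex.exp_ofReal_mul_I_im]
  nlinarith [Real.sin_sq_add_cos_sq θ]

lemma exp_cube_aux (θ : ℝ) (x : ℂ) :
    Complex.exp (θ*Complex.I) * Complex.I * (x / Complex.exp (θ*Complex.I) ^ 3)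
      = Complex.I * Complex.exp (-2*θ*Complex.I) * x := by
  have hne : Complex.exp ((θ:ℂ)*Complex.I) ≠ 0 := Complex.exp_ne_zero _
  have hkey : Complex.exp (-2*(θ:ℂ)*Complex.I) * Complex.exp ((θ:ℂ)*Complex.I)^3
      = Complex.exp ((θ:ℂ)*Complex.I) := by
    rw [← Complex.exp_nat_mul, ← Complex.exp_add]
    congr 1
    push_cast
    ring
  field_simp
  have h2 : Complex.exp (θ*Complex.I) ^ 2 * Complex.exp (-(θ*Complex.I*2)) = 1 := by
    rw [← Complex.exp_nat_mul, ← Complex.exp_add, ← Complex.exp_zero]; congr 1; push_cast; ring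
  linear_combination (-x) * h2

end Aux

/-- for every real `c > 0`,
`(1/(2πi)) ∮_{|z|=1} (|1 + √c·z|²/(1 + |1 + √c·z|²))/z³ dz
  = −(1/(2+c)) Σ_{k=1}^∞ (√c/(2+c))^{2k} (2k)!/((k−1)!(k+1)!)`,
where the series converges absolutely (nonnegative terms).  The series over
`k ≥ 1` is written as a `tsum` over `ℕ` via the shift `k ↦ k+1`. -/
theorem stmt_17 (c : ℝ) (hc : 0 < c) :
    Summable (fun k : ℕ =>
      (Real.sqrt c / (2 + c)) ^ (2 * (k + 1)) *
        (Nat.factorial (2 * (k + 1)) : ℝ) /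
          ((Nat.factorial k : ℝ) * (Nat.factorial (k + 2) : ℝ))) ∧
    (1 / (2 * Real.pi * Complex.I)) *
        (∮ z in C(0, 1),
          ((‖1 + (Real.sqrt c : ℂ) * z‖ ^ 2 /
              (1 + ‖1 + (Real.sqrt c : ℂ) * z‖ ^ 2) : ℝ) : ℂ) / z ^ 3)
      = ((-((1 / (2 + c)) *
            ∑' k : ℕ,
              (Real.sqrt c / (2 + c)) ^ (2 * (k + 1)) *
                (Nat.factorial (2 * (k + 1)) : ℝ) /
                  ((Nat.factorial k : ℝ) * (Nat.factorial (k + 2) : ℝ))) : ℝ) : ℂ) := by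
  set s := Real.sqrt c with hsdef
  have hs0 : 0 < s := Real.sqrt_pos.2 hc
  have hs2 : s^2 = c := Real.sq_sqrt hc.le
  have h2c : (0:ℝ) < 2 + c := by linarith
  have hslt : 2*s < 2 + c := by nlinarith [sq_nonneg (s-1)]
  set r : ℝ := 2*s/(2+c) with hrdef
  have hr0 : 0 < r := by positivity
  have hr1 : r < 1 := (div_lt_one h2c).2 hslt
  -- Part 1 : summability
  have hterm : ∀ k : ℕ, (s / (2 + c)) ^ (2 * (k + 1)) *
        ((2 * (k + 1)).factorial : ℝ) /
          ((k.factorial : ℝ) * ((k + 2).factorial : ℝ))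
      = (s/(2+c))^(2*(k+1)) * ((2*k+2).choose (k+2) : ℝ) := by
    intro k
    rw [mul_div_assoc, fac_choose]
  have hsummable : Summable (fun k : ℕ =>
      (s / (2 + c)) ^ (2 * (k + 1)) *
        ((2 * (k + 1)).factorial : ℝ) /
          ((k.factorial : ℝ) * ((k + 2).factorial : ℝ))) := by
    simp_rw [hterm]
    have hgeo : Summable (fun k : ℕ => (r^2)^(k+1)) := by
      have : Summable (fun k : ℕ => (r^2)^k) :=
        summable_geometric_of_lt_one (by positivity) (by nlinarith)
      exact (summable_nat_add_iff 1).2 this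
    refine Summable.of_nonneg_of_le (fun k => by positivity) (fun k => ?_) hgeo
    have hb : ((2*k+2).choose (k+2) : ℝ) ≤ (2:ℝ)^(2*(k+1)) := by
      have : (2*k+2).choose (k+2) ≤ 2^(2*k+2) := by
        rw [← Nat.sum_range_choose]
        exact Finset.single_le_sum (fun i _ => Nat.zero_le _) (Finset.mem_range.2 (by omega))
      calc ((2*k+2).choose (k+2) : ℝ) ≤ ((2^(2*k+2) : ℕ) : ℝ) := by exact_mod_cast this
        _ = (2:ℝ)^(2*(k+1)) := by push_cast; ring_nf
    calc (s/(2+c))^(2*(k+1)) * ((2*k+2).choose (k+2) : ℝ)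
        ≤ (s/(2+c))^(2*(k+1)) * (2:ℝ)^(2*(k+1)) := by
          apply mul_le_mul_of_nonneg_left hb (by positivity)
      _ = (r^2)^(k+1) := by
          rw [← mul_pow, hrdef, ← pow_mul]
          congr 1
          field_simp
  refine ⟨hsummable, ?_⟩
  -- Part 2 : the integral
  have hpi : (0:ℝ) < 2*π := by positivity
  have hD : ∀ θ : ℝ, 0 < 2 + c + 2*s*Real.cos θ := by
    intro θ
    nlinarith [Real.neg_one_le_cos θ]
  -- reduce circle integral to an interval integral
  have hcirc : (∮ z in C(0, 1),
        ((‖1 + (s : ℂ) * z‖ ^ 2 /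
            (1 + ‖1 + (s : ℂ) * z‖ ^ 2) : ℝ) : ℂ) / z ^ 3)
      = ∫ θ in (0:ℝ)..(2*π),
          Complex.I * Complex.exp (-2*θ*Complex.I) * ((1 - 1/(2 + c + 2*s*Real.cos θ) : ℝ) : ℂ) := by
    rw [circleIntegral]
    refine intervalIntegral.integral_congr fun θ _ => ?_
    rw [deriv_circleMap]
    simp only [circleMap_zero, Complex.ofReal_one, one_mul, smul_eq_mul]
    have habs : ‖1 + (s:ℂ) * Complex.exp (θ*Complex.I)‖^2
        = 1 + c + 2*s*Real.cos θ := by rw [abs_sq_aux, hs2]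
    rw [habs]
    have hq : ((1 + c + 2*s*Real.cos θ) / (1 + (1 + c + 2*s*Real.cos θ)) : ℝ)
        = 1 - 1/(2 + c + 2*s*Real.cos θ) := by
      have h0 : (0:ℝ) < 1 + (1 + c + 2*s*Real.cos θ) := by nlinarith [Real.neg_one_le_cos θ]
      rw [show (2 + c + 2*s*Real.cos θ) = 1 + (1 + c + 2*s*Real.cos θ) by ring]
      field_simp
      ring
    rw [hq]
    exact exp_cube_aux θ _
  rw [hcirc]
  -- continuity facts
  have hcontD : Continuous (fun θ : ℝ => ((1/(2 + c + 2*s*Real.cos θ) : ℝ) : ℂ)) := by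
    apply Complex.continuous_ofReal.comp
    exact continuous_const.div (by fun_prop) (fun θ => (hD θ).ne')
  have hcontE : Continuous (fun θ : ℝ => Complex.I * Complex.exp (-2*(θ:ℂ)*Complex.I)) := by
    fun_prop
  -- split the integral
  have hsplit : (∫ θ in (0:ℝ)..(2*π),
        Complex.I * Complex.exp (-2*θ*Complex.I) * ((1 - 1/(2 + c + 2*s*Real.cos θ) : ℝ) : ℂ))
      = (∫ θ in (0:ℝ)..(2*π), Complex.I * Complex.exp (-2*θ*Complex.I))
        - ∫ θ in (0:ℝ)..(2*π),
            Complex.I * Complex.exp (-2*θ*Complex.I) * ((1/(2 + c + 2*s*Real.cos θ) : ℝ) : ℂ) := by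
    rw [← intervalIntegral.integral_sub (by apply Continuous.intervalIntegrable; fun_prop)
      (by apply Continuous.intervalIntegrable; exact hcontE.mul hcontD)]
    refine intervalIntegral.integral_congr fun θ _ => ?_
    push_cast
    ring
  -- the first integral vanishes
  have hA : (∫ θ in (0:ℝ)..(2*π), Complex.I * Complex.exp (-2*(θ:ℂ)*Complex.I)) = 0 := by
    rw [intervalIntegral.integral_const_mul]
    have h2 := K_lemma (-2)
    simp only [Int.cast_neg, Int.cast_ofNat, Int.cast_two] at h2
    rw [if_neg (by norm_num)] at h2
    rw [h2, mul_zero]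
  rw [hsplit, hA, zero_sub]
  set F : ℕ → ℝ → ℂ := fun n θ =>
    Complex.I * Complex.exp (-2*(θ:ℂ)*Complex.I) * (((1/(2+c)) * (-(r * Real.cos θ))^n : ℝ) : ℂ)
    with hFdef
  have hFcont : ∀ n, Continuous (F n) := by intro n; rw [hFdef]; fun_prop
  have h0le : (0:ℝ) ≤ 2*π := hpi.le
  -- pointwise sum of the geometric series
  have htsum : ∀ θ : ℝ, ∑' n : ℕ, F n θ
      = Complex.I * Complex.exp (-2*(θ:ℂ)*Complex.I) * ((1/(2 + c + 2*s*Real.cos θ) : ℝ) : ℂ) := by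
    intro θ
    have hxa : |(-(r * Real.cos θ))| < 1 := by
      rw [abs_neg, abs_mul]
      calc |r| * |Real.cos θ| ≤ |r| * 1 :=
            mul_le_mul_of_nonneg_left (Real.abs_cos_le_one θ) (abs_nonneg r)
        _ = r := by rw [mul_one, abs_of_pos hr0]
        _ < 1 := hr1
    have hgeom : ∑' n:ℕ, (-(r*Real.cos θ))^n = (1 - (-(r*Real.cos θ)))⁻¹ :=
      tsum_geometric_of_abs_lt_one hxa
    have hrw : (fun n : ℕ => F n θ) = fun n =>
        (Complex.I * Complex.exp (-2*(θ:ℂ)*Complex.I) * ((1/(2+c) : ℝ):ℂ))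
          * (((-(r*Real.cos θ))^n : ℝ) : ℂ) := by
      funext n
      simp only [hFdef]
      push_cast
      ring
    rw [hrw, tsum_mul_left, ← Complex.ofReal_tsum, hgeom]
    have hreal : (1/(2+c) : ℝ) * (1 - (-(r*Real.cos θ)))⁻¹ = 1/(2 + c + 2*s*Real.cos θ) := by
      have h01 : (0:ℝ) < 1 + r*Real.cos θ := by
        have h := abs_lt.mp hxa
        linarith [h.1, h.2]
      rw [hrdef] at h01 ⊢
      field_simp
      rw [sub_neg_eq_add]
    rw [mul_assoc, ← Complex.ofReal_mul, hreal]
  -- integrability and norm bounds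
  have hFint : ∀ n : ℕ, MeasureTheory.IntegrableOn (F n) (Set.Ioc (0:ℝ) (2*π)) := by
    intro n
    exact (intervalIntegrable_iff_integrableOn_Ioc_of_le h0le).1
      ((hFcont n).intervalIntegrable _ _)
  have hnorm : ∀ (n : ℕ) (θ : ℝ), ‖F n θ‖ ≤ (1/(2+c)) * r^n := by
    intro n θ
    have h1 : ‖Complex.exp (-2*(θ:ℂ)*Complex.I)‖ = 1 := by
      rw [Complex.norm_exp]
      have : (-2*(θ:ℂ)*Complex.I).re = 0 := by simp
      rw [this, Real.exp_zero]
    simp only [hFdef, norm_mul, Complex.norm_I, h1, one_mul, mul_one, Complex.norm_real,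
      Real.norm_eq_abs, abs_mul, abs_pow, abs_neg]
    rw [abs_of_pos (show (0:ℝ) < 1/(2+c) by positivity)]
    apply mul_le_mul_of_nonneg_left _ (by positivity)
    apply pow_le_pow_left₀ (by positivity)
    calc |r| * |Real.cos θ| ≤ |r| * 1 :=
          mul_le_mul_of_nonneg_left (Real.abs_cos_le_one θ) (abs_nonneg r)
      _ = r := by rw [mul_one, abs_of_pos hr0]
  have hsum_norm : Summable (fun n : ℕ => ∫ θ in Set.Ioc (0:ℝ) (2*π), ‖F n θ‖) := by
    have hgeo2 : Summable (fun n : ℕ => (2*π*(1/(2+c))) * r^n) :=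
      (summable_geometric_of_lt_one hr0.le hr1).mul_left _
    refine Summable.of_nonneg_of_le
      (fun n => MeasureTheory.integral_nonneg fun θ => norm_nonneg _) (fun n => ?_) hgeo2
    calc (∫ θ in Set.Ioc (0:ℝ) (2*π), ‖F n θ‖)
        ≤ ∫ _ in Set.Ioc (0:ℝ) (2*π), (1/(2+c)) * r^n := by
          refine MeasureTheory.integral_mono_of_nonneg
            (Filter.Eventually.of_forall fun θ => norm_nonneg _)
            (MeasureTheory.integrableOn_const ?_)
            (Filter.Eventually.of_forall fun θ => hnorm n θ)
          rw [Real.volume_Ioc]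
          exact ENNReal.ofReal_ne_top
      _ = (2*π) * ((1/(2+c)) * r^n) := by
          rw [MeasureTheory.setIntegral_const, Real.volume_real_Ioc_of_le h0le, smul_eq_mul]
          ring
      _ = (2*π*(1/(2+c))) * r^n := by ring
  -- the series of integrals sums to B
  have hHasSum : HasSum (fun n : ℕ => ∫ θ in Set.Ioc (0:ℝ) (2*π), F n θ)
      (∫ θ in (0:ℝ)..(2*π),
        Complex.I * Complex.exp (-2*θ*Complex.I) * ((1/(2 + c + 2*s*Real.cos θ) : ℝ) : ℂ)) := by
    have h := MeasureTheory.hasSum_integral_of_summable_integral_norm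
      (μ := MeasureTheory.volume.restrict (Set.Ioc (0:ℝ) (2*π))) (F := F) hFint hsum_norm
    have hval : (∫ θ in Set.Ioc (0:ℝ) (2*π), (∑' n, F n θ))
        = ∫ θ in (0:ℝ)..(2*π),
            Complex.I * Complex.exp (-2*θ*Complex.I) * ((1/(2 + c + 2*s*Real.cos θ) : ℝ) : ℂ) := by
      rw [intervalIntegral.integral_of_le h0le]
      exact MeasureTheory.integral_congr_ae (Filter.Eventually.of_forall fun θ => htsum θ)
    rw [← hval]
    exact h
  -- value of each integral
  have hGn : ∀ n : ℕ, (∫ θ in Set.Ioc (0:ℝ) (2*π), F n θ)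
      = (Complex.I * (((1/(2+c)) * (-r)^n : ℝ) : ℂ))
          * (∫ θ in (0:ℝ)..(2*π), Complex.exp (-2*θ*Complex.I) * ((Real.cos θ : ℂ))^n) := by
    intro n
    rw [← intervalIntegral.integral_of_le h0le, ← intervalIntegral.integral_const_mul]
    refine intervalIntegral.integral_congr fun θ _ => ?_
    simp only [hFdef]
    push_cast
    ring
  have hGzero : ∀ n : ℕ, (∀ k, n ≠ 2*k+2) → (∫ θ in Set.Ioc (0:ℝ) (2*π), F n θ) = 0 := by
    intro n hn
    rw [hGn n, J_zero n hn, mul_zero]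
  have hGval : ∀ k : ℕ, (∫ θ in Set.Ioc (0:ℝ) (2*π), F (2*k+2) θ)
      = (((2*π:ℝ):ℂ) * Complex.I)
          * ((((1/(2+c)) * ((s/(2+c))^(2*(k+1)) * ((2*(k+1)).factorial : ℝ) /
              ((k.factorial:ℝ) * ((k+2).factorial:ℝ))) : ℝ)) : ℂ) := by
    intro k
    rw [hGn, J_even]
    have hreal2 : ((1/(2+c)) * ((s/(2+c))^(2*(k+1)) * ((2*(k+1)).factorial : ℝ) /
          ((k.factorial:ℝ) * ((k+2).factorial:ℝ))) : ℝ)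
        = (1/(2+c)) * (-r)^(2*k+2) * (((2*k+2).choose (k+2) : ℝ) / 2^(2*k+2)) := by
      rw [hterm k]
      have hneg : (-r)^(2*k+2) = r^(2*k+2) := Even.neg_pow ⟨k+1, by ring⟩ r
      rw [hneg, hrdef, show 2*(k+1) = 2*k+2 from by ring,
        show (2*s/(2+c)) = 2*(s/(2+c)) from by ring, mul_pow]
      have h2n : ((2:ℝ))^(2*k+2) ≠ 0 := by positivity
      field_simp
    rw [hreal2]
    push_cast
    ring
  -- reindexing over even indices ≥ 2
  have hinj : Function.Injective (fun k : ℕ => 2*k+2) := by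
    intro a b h
    simp only [] at h
    omega
  have hsupp : Function.support (fun n : ℕ => ∫ θ in Set.Ioc (0:ℝ) (2*π), F n θ)
      ⊆ Set.range (fun k : ℕ => 2*k+2) := by
    intro n hn
    by_contra h
    apply hn
    apply hGzero
    intro k hk
    exact h ⟨k, hk.symm⟩
  have hB : (∫ θ in (0:ℝ)..(2*π),
        Complex.I * Complex.exp (-2*θ*Complex.I) * ((1/(2 + c + 2*s*Real.cos θ) : ℝ) : ℂ))
      = ∑' k : ℕ, (∫ θ in Set.Ioc (0:ℝ) (2*π), F (2*k+2) θ) := by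
    rw [← hHasSum.tsum_eq]
    exact (hinj.tsum_eq hsupp).symm
  -- sum the series
  have hBsum : (∫ θ in (0:ℝ)..(2*π),
        Complex.I * Complex.exp (-2*θ*Complex.I) * ((1/(2 + c + 2*s*Real.cos θ) : ℝ) : ℂ))
      = (((2*π:ℝ):ℂ) * Complex.I) *
          ((((1/(2+c)) * ∑' k : ℕ, ((s/(2+c))^(2*(k+1)) * ((2*(k+1)).factorial : ℝ) /
              ((k.factorial:ℝ) * ((k+2).factorial:ℝ))) : ℝ)) : ℂ) := by
    rw [hB]
    have : (fun k : ℕ => ∫ θ in Set.Ioc (0:ℝ) (2*π), F (2*k+2) θ)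
        = fun k : ℕ => (((2*π:ℝ):ℂ) * Complex.I)
            * ((((1/(2+c)) * ((s/(2+c))^(2*(k+1)) * ((2*(k+1)).factorial : ℝ) /
                ((k.factorial:ℝ) * ((k+2).factorial:ℝ))) : ℝ)) : ℂ) := funext hGval
    rw [this]
    rw [tsum_mul_left, ← Complex.ofReal_tsum, tsum_mul_left]
  rw [hBsum]
  push_cast
  have hπ : ((π:ℝ):ℂ) ≠ 0 := Complex.ofReal_ne_zero.2 Real.pi_ne_zero
  have h2cC : ((2:ℂ)+(c:ℂ)) ≠ 0 := by
    have : ((2+c:ℝ):ℂ) ≠ 0 := Complex.ofReal_ne_zero.2 h2c.ne'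
    push_cast at this
    exact this
  field_simp
end
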